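/- arXiv:2502.00332 — 8 statements merged into one kernel-verified Lean document; each statement's English description precedes it below -/
import Mathlib

section
/- Let A be a commutative ring, J a nilpotent ideal of A, and u : M → N a homomorphism of A-modules such that N is flat over A. If the induced map M/JM → N/JN is an isomorphism, then u is an isomorphism. -/
open scoped TensorProduct


/-- Let `A` be a commutative ring, `J` a nilpotent ideal of `A`, and
`u : M → N` a homomorphism of `A`-modules with `N` flat over `A`.  If the induced map
`M/JM → N/JN` is an isomorphism, then `u` is an isomorphism. -/
theorem nilpotent_ideal_flat_isom {A : Type*} [CommRing A]
    {M N : Type*} [AddCommGroup M] [Module A M] [AddCommGroup N] [Module A N]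
    (J : Ideal A) (hJ : ∃ n : ℕ, J ^ n = ⊥)
    [Module.Flat A N] (u : M →ₗ[A] N)
    (h : Function.Bijective
      (Submodule.mapQ (J • (⊤ : Submodule A M)) (J • (⊤ : Submodule A N)) u
        (by
          refine Submodule.smul_le.2 fun a ha m _ => ?_
          simp only [Submodule.mem_comap, map_smul]
          exact Submodule.smul_mem_smul ha Submodule.mem_top))) :
    Function.Bijective u := by
  obtain ⟨n, hJn⟩ := hJ
  -- Step 1: `u` is surjective.
  have hsup : (⊤ : Submodule A N) ≤ LinearMap.range u ⊔ J • (⊤ : Submodule A N) := by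
    intro x _
    obtain ⟨m, hm⟩ := h.surjective (Submodule.Quotient.mk x)
    obtain ⟨m', rfl⟩ := Submodule.mkQ_surjective _ m
    rw [Submodule.mkQ_apply, Submodule.mapQ_apply] at hm
    have hxm : u m' - x ∈ J • (⊤ : Submodule A N) := (Submodule.Quotient.eq _).mp hm
    have : x = u m' - (u m' - x) := (sub_sub_cancel _ _).symm
    rw [this]
    exact Submodule.sub_mem _ (Submodule.mem_sup_left ⟨m', rfl⟩)
      (Submodule.mem_sup_right hxm)
  have hsupk : ∀ k : ℕ, (⊤ : Submodule A N) ≤ LinearMap.range u ⊔ J ^ k • (⊤ : Submodule A N) := by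
    intro k
    induction k with
    | zero => simp [Ideal.one_eq_top, Submodule.top_smul]
    | succ k ih =>
      refine le_trans ih (sup_le le_sup_left ?_)
      have h1 : J ^ k • (⊤ : Submodule A N)
          ≤ J ^ k • (LinearMap.range u ⊔ J • (⊤ : Submodule A N)) :=
        Submodule.smul_mono le_rfl hsup
      rw [Submodule.smul_sup] at h1
      refine le_trans h1 (sup_le ?_ ?_)
      · refine le_trans ?_ (le_sup_left)
        exact Submodule.smul_le.2 fun a _ m hm => Submodule.smul_mem _ a hm
      · rw [← mul_smul, ← pow_succ]
        exact le_sup_right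
  have husurj : Function.Surjective u := by
    rw [← LinearMap.range_eq_top]
    have := hsupk n
    rw [hJn, Submodule.bot_smul, sup_bot_eq] at this
    exact top_le_iff.mp this
  -- Step 2: `u` is injective.
  -- Multiplication maps `J ⊗ P → P`.
  set μM : J ⊗[A] M →ₗ[A] M :=
    TensorProduct.lift ((LinearMap.lsmul A M).comp J.subtype) with hμM
  set μN : J ⊗[A] N →ₗ[A] N :=
    TensorProduct.lift ((LinearMap.lsmul A N).comp J.subtype) with hμN
  set K := LinearMap.ker u with hKdef
  -- naturality
  have hnat : μN.comp (LinearMap.lTensor J u) = u.comp μM := by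
    apply TensorProduct.ext'
    intro a m
    simp [hμM, hμN]
  have hnatK : μM.comp (LinearMap.lTensor J K.subtype) = K.subtype.comp
      (TensorProduct.lift ((LinearMap.lsmul A K).comp J.subtype)) := by
    apply TensorProduct.ext'
    intro a k
    simp [hμM]
  -- μN is injective by flatness
  have hμNinj : Function.Injective μN := by
    have h1 : Function.Injective (LinearMap.rTensor N J.subtype) :=
      (Module.Flat.iff_rTensor_injective' (R := A) (M := N)).mp inferInstance J
    rw [hμN, ← LinearMap.lid_comp_rTensor]
    simpa using (TensorProduct.lid A N).injective.comp h1
  -- key: K ≤ J • K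
  have hkey : K ≤ J • K := by
    intro x hx
    have hux : u x = 0 := hx
    -- x ∈ J • ⊤ in M
    have hxJM : x ∈ J • (⊤ : Submodule A M) := by
      have h0 : Submodule.mapQ (J • (⊤ : Submodule A M)) (J • (⊤ : Submodule A N)) u
          (by
            refine Submodule.smul_le.2 fun a ha m _ => ?_
            simp only [Submodule.mem_comap, map_smul]
            exact Submodule.smul_mem_smul ha Submodule.mem_top)
          (Submodule.Quotient.mk x) = 0 := by
        rw [Submodule.mapQ_apply, hux]
        simp
      have := h.injective (a₁ := Submodule.Quotient.mk x) (a₂ := 0) (by simpa using h0)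
      exact (Submodule.Quotient.mk_eq_zero _).mp this
    -- lift x to J ⊗ M
    have hlift : ∃ ξ : J ⊗[A] M, μM ξ = x := by
      refine Submodule.smul_induction_on hxJM ?_ ?_
      · intro a ha m _
        exact ⟨(⟨a, ha⟩ : J) ⊗ₜ m, by simp [hμM]⟩
      · rintro y z ⟨ξ, rfl⟩ ⟨η, rfl⟩
        exact ⟨ξ + η, by simp⟩
    obtain ⟨ξ, hξ⟩ := hlift
    -- the image of ξ in J ⊗ N is zero
    have hξN : LinearMap.lTensor J u ξ ∈ LinearMap.ker μN := by
      rw [LinearMap.mem_ker, ← LinearMap.comp_apply, hnat, LinearMap.comp_apply, hξ, hux]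
    have hξN0 : LinearMap.lTensor J u ξ = 0 :=
      hμNinj (by simpa using hξN)
    -- exactness: ξ comes from J ⊗ K
    have hexact : Function.Exact (LinearMap.lTensor J K.subtype) (LinearMap.lTensor J u) :=
      lTensor_exact J (u.exact_subtype_ker_map) husurj
    obtain ⟨ζ, hζ⟩ := (hexact _).mp hξN0
    -- conclude
    have : x = K.subtype (TensorProduct.lift ((LinearMap.lsmul A K).comp J.subtype) ζ) := by
      rw [← hξ, ← hζ, ← LinearMap.comp_apply, hnatK, LinearMap.comp_apply]
    rw [this]
    have hmem : ∀ ζ' : (J : Type _) ⊗[A] K,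
        TensorProduct.lift ((LinearMap.lsmul A K).comp J.subtype) ζ' ∈ J • (⊤ : Submodule A K) := by
      intro ζ'
      induction ζ' using TensorProduct.induction_on with
      | zero => simp
      | tmul a k =>
        simp only [TensorProduct.lift.tmul, LinearMap.comp_apply, Submodule.subtype_apply,
          LinearMap.lsmul_apply]
        exact Submodule.smul_mem_smul a.2 Submodule.mem_top
      | add y z hy hz =>
        rw [map_add]
        exact Submodule.add_mem _ hy hz
    have := Submodule.map_smul'' J (⊤ : Submodule A K) K.subtype
    have h2 : K.subtype (TensorProduct.lift ((LinearMap.lsmul A K).comp J.subtype) ζ)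
        ∈ Submodule.map K.subtype (J • (⊤ : Submodule A K)) :=
      Submodule.mem_map_of_mem (hmem ζ)
    rw [this, Submodule.map_top, Submodule.range_subtype] at h2
    exact h2
  have hKk : ∀ k : ℕ, K ≤ J ^ k • K := by
    intro k
    induction k with
    | zero => simp [Ideal.one_eq_top, Submodule.top_smul]
    | succ k ih =>
      refine le_trans hkey ?_
      refine le_trans (Submodule.smul_mono le_rfl ih) ?_
      rw [← mul_smul, ← pow_succ']
  have hK : K = ⊥ := by
    have := hKk n
    rw [hJn, Submodule.bot_smul] at this
    exact le_bot_iff.mp this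
  exact ⟨LinearMap.ker_eq_bot.mp hK, husurj⟩
end

section
/- Let k be a field, let A'' → A and A' → A be homomorphisms of Artinian local k-algebras with residue field k, with A'' → A surjective, and let Ā = A'' ×_A A' be the fiber product. Let B̄ be a flat Ā-algebra, B'' a flat A''-algebra, and B' a flat A'-algebra, and suppose given an A''-algebra isomorphism f'' : B̄ ⊗_Ā A'' ≅ B'' and an A'-algebra isomorphism g' : B̄ ⊗_Ā A' ≅ B'. Let f : B̄ ⊗_Ā A ≅ B'' ⊗_{A''} A and g : B̄ ⊗_Ā A ≅ B' ⊗_{A'} A be the induced isomorphisms and set σ = g ∘ f⁻¹ : B'' ⊗_{A''} A → B' ⊗_{A'} A. Then the canonical Ā-algebra map from B̄ to the fiber product B'' ×_σ B' (the fiber product of B'' → B'' ⊗_{A''} A →^σ B' ⊗_{A'} A and B' → B' ⊗_{A'} A) is an isomorphism. -/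
open scoped TensorProduct

set_option maxHeartbeats 1000000
set_option synthInstance.maxHeartbeats 100000

/-- Lemma 2.2 / Schlessinger's Lemma 3.4.  Let `k` be a field, let
`A'' → A` and `A' → A` be homomorphisms of Artinian local `k`-algebras with residue field
`k`, with `A'' → A` surjective, and let `Ā = A'' ×_A A'` be the fiber product (expressed
below by the universal property `hpb`).  Let `B̄` be a flat `Ā`-algebra, `B''` a flat
`A''`-algebra and `B'` a flat `A'`-algebra, with isomorphisms `f'' : B̄ ⊗_Ā A'' ≅ B''` and
`g' : B̄ ⊗_Ā A' ≅ B'`.  Let `σ : B'' ⊗_A'' A ≅ B' ⊗_A' A` be the composite `g ∘ f⁻¹` of the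
induced isomorphisms (expressed by `hσ`).  Then the canonical map from `B̄` to the fiber
product `B'' ×_σ B'` is an isomorphism. -/
theorem fiber_product_of_deformations_isomorphism
    (k : Type*) [Field k]
    (A A'' A' Abar : Type*)
    [CommRing A] [CommRing A''] [CommRing A'] [CommRing Abar]
    [Algebra k A] [Algebra k A''] [Algebra k A'] [Algebra k Abar]
    [IsArtinianRing A] [IsLocalRing A]
    [IsArtinianRing A''] [IsLocalRing A'']
    [IsArtinianRing A'] [IsLocalRing A']
    [IsArtinianRing Abar] [IsLocalRing Abar]
    (hresA : Function.Bijective ((IsLocalRing.residue A).comp (algebraMap k A)))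
    (hresA'' : Function.Bijective ((IsLocalRing.residue A'').comp (algebraMap k A'')))
    (hresA' : Function.Bijective ((IsLocalRing.residue A').comp (algebraMap k A')))
    (hresAbar : Function.Bijective ((IsLocalRing.residue Abar).comp (algebraMap k Abar)))
    [Algebra A'' A] [Algebra A' A] [Algebra Abar A''] [Algebra Abar A'] [Algebra Abar A]
    [IsScalarTower k A'' A] [IsScalarTower k A' A]
    [IsScalarTower k Abar A''] [IsScalarTower k Abar A']
    [IsScalarTower Abar A'' A] [IsScalarTower Abar A' A]
    (hsurj : Function.Surjective (algebraMap A'' A))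
    (hpb : ∀ (a'' : A'') (a' : A'), algebraMap A'' A a'' = algebraMap A' A a' →
      ∃! abar : Abar, algebraMap Abar A'' abar = a'' ∧ algebraMap Abar A' abar = a')
    (Bbar B'' B' : Type*) [CommRing Bbar] [CommRing B''] [CommRing B']
    [Algebra Abar Bbar] [Module.Flat Abar Bbar]
    [Algebra A'' B''] [Module.Flat A'' B'']
    [Algebra A' B'] [Module.Flat A' B']
    (f'' : (A'' ⊗[Abar] Bbar) ≃ₐ[A''] B'')
    (g' : (A' ⊗[Abar] Bbar) ≃ₐ[A'] B')
    (σ : (A ⊗[A''] B'') ≃ₐ[A] (A ⊗[A'] B'))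
    (hσ : ∀ b : Bbar,
      σ ((1 : A) ⊗ₜ[A''] f'' ((1 : A'') ⊗ₜ[Abar] b)) =
        (1 : A) ⊗ₜ[A'] g' ((1 : A') ⊗ₜ[Abar] b)) :
    Function.Bijective (fun b : Bbar =>
      (⟨(f'' ((1 : A'') ⊗ₜ[Abar] b), g' ((1 : A') ⊗ₜ[Abar] b)), hσ b⟩ :
        {w : B'' × B' // σ ((1 : A) ⊗ₜ[A''] w.1) = (1 : A) ⊗ₜ[A'] w.2})) := by
  -- The two projection maps, tensored with Bbar
  set π'' : A'' →ₗ[Abar] A := (IsScalarTower.toAlgHom Abar A'' A).toLinearMap with hπ''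
  set π' : A' →ₗ[Abar] A := (IsScalarTower.toAlgHom Abar A' A).toLinearMap with hπ'
  set p'' : (A'' ⊗[Abar] Bbar) →ₗ[Abar] (A ⊗[Abar] Bbar) := LinearMap.rTensor Bbar π'' with hp''
  set p' : (A' ⊗[Abar] Bbar) →ₗ[Abar] (A ⊗[Abar] Bbar) := LinearMap.rTensor Bbar π' with hp'
  have hp''t : ∀ (a : A'') (b : Bbar), p'' (a ⊗ₜ[Abar] b) = algebraMap A'' A a ⊗ₜ[Abar] b := by
    intro a b; simp [hp'', hπ'']
  have hp't : ∀ (a : A') (b : Bbar), p' (a ⊗ₜ[Abar] b) = algebraMap A' A a ⊗ₜ[Abar] b := by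
    intro a b; simp [hp', hπ']
  -- The comparison equivalence η : A ⊗[A'] B' ≃ A ⊗[Abar] Bbar
  let η : (A ⊗[A'] B') ≃ₗ[A] (A ⊗[Abar] Bbar) :=
    (TensorProduct.AlgebraTensorModule.congr (LinearEquiv.refl A A)
      g'.symm.toLinearEquiv).trans
      (TensorProduct.AlgebraTensorModule.cancelBaseChange Abar A' A A Bbar)
  have hη1 : ∀ b : Bbar, η ((1 : A) ⊗ₜ[A'] g' ((1 : A') ⊗ₜ[Abar] b)) = (1 : A) ⊗ₜ[Abar] b := by
    intro b
    simp [η, TensorProduct.AlgebraTensorModule.congr_tmul]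
  -- pure-tensor smul rewriting helpers
  have key' : ∀ (c : A) (x : B'), (c ⊗ₜ[A'] x : A ⊗[A'] B') = c • ((1 : A) ⊗ₜ[A'] x) := by
    intro c x; rw [TensorProduct.smul_tmul', smul_eq_mul, mul_one]
  have key'' : ∀ (c : A) (x : B''), (c ⊗ₜ[A''] x : A ⊗[A''] B'') = c • ((1 : A) ⊗ₜ[A''] x) := by
    intro c x; rw [TensorProduct.smul_tmul', smul_eq_mul, mul_one]
  have keyb : ∀ (c : A) (x : Bbar), (c ⊗ₜ[Abar] x : A ⊗[Abar] Bbar) = c • ((1 : A) ⊗ₜ[Abar] x) := by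
    intro c x; rw [TensorProduct.smul_tmul', smul_eq_mul, mul_one]
  -- Claim 2: η ∘ (1 ⊗ g' ·) = p'
  have claim2 : ∀ w : A' ⊗[Abar] Bbar, η ((1 : A) ⊗ₜ[A'] g' w) = p' w := by
    intro w
    induction w using TensorProduct.induction_on with
    | zero => simp
    | tmul a b =>
        have h1 : (a ⊗ₜ[Abar] b : A' ⊗[Abar] Bbar) = a • ((1 : A') ⊗ₜ[Abar] b) := by
          rw [TensorProduct.smul_tmul', smul_eq_mul, mul_one]
        have hg : g' (a ⊗ₜ[Abar] b) = a • g' ((1 : A') ⊗ₜ[Abar] b) := by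
          rw [h1]; exact map_smul g' a _
        have h2 : (1 : A) ⊗ₜ[A'] (a • g' ((1 : A') ⊗ₜ[Abar] b))
            = (algebraMap A' A a) ⊗ₜ[A'] g' ((1 : A') ⊗ₜ[Abar] b) := by
          rw [← TensorProduct.smul_tmul, Algebra.algebraMap_eq_smul_one]
        rw [hg, h2, key', map_smul, hη1, hp't, TensorProduct.smul_tmul', smul_eq_mul, mul_one]
    | add x y hx hy => simp only [map_add, TensorProduct.tmul_add, hx, hy]
  -- Claim 1: η ∘ σ ∘ (1 ⊗ f'' ·) = p''
  have claim1 : ∀ z : A'' ⊗[Abar] Bbar, η (σ ((1 : A) ⊗ₜ[A''] f'' z)) = p'' z := by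
    intro z
    induction z using TensorProduct.induction_on with
    | zero => simp
    | tmul a b =>
        have h1 : (a ⊗ₜ[Abar] b : A'' ⊗[Abar] Bbar) = a • ((1 : A'') ⊗ₜ[Abar] b) := by
          rw [TensorProduct.smul_tmul', smul_eq_mul, mul_one]
        have hf : f'' (a ⊗ₜ[Abar] b) = a • f'' ((1 : A'') ⊗ₜ[Abar] b) := by
          rw [h1]; exact map_smul f'' a _
        have h2 : (1 : A) ⊗ₜ[A''] (a • f'' ((1 : A'') ⊗ₜ[Abar] b))
            = (algebraMap A'' A a) ⊗ₜ[A''] f'' ((1 : A'') ⊗ₜ[Abar] b) := by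
          rw [← TensorProduct.smul_tmul, Algebra.algebraMap_eq_smul_one]
        rw [hf, h2, key'', map_smul, map_smul, hσ b, hη1, hp''t, TensorProduct.smul_tmul', smul_eq_mul, mul_one]
    | add x y hx hy =>
        simp only [map_add, TensorProduct.tmul_add] at hx hy ⊢
        rw [hx, hy]
  -- the exact sequence 0 → Abar → A'' × A' → A
  set i : Abar →ₗ[Abar] A'' × A' :=
    LinearMap.prod (Algebra.linearMap Abar A'') (Algebra.linearMap Abar A') with hi
  set d : (A'' × A') →ₗ[Abar] A :=
    π''.comp (LinearMap.fst Abar A'' A') - π'.comp (LinearMap.snd Abar A'' A') with hd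
  have hcomm : ∀ x : Abar, algebraMap A'' A (algebraMap Abar A'' x) = algebraMap A' A (algebraMap Abar A' x) := by
    intro x
    rw [← IsScalarTower.algebraMap_apply, ← IsScalarTower.algebraMap_apply]
  have hinj : Function.Injective i := by
    intro x y hxy
    simp only [hi, LinearMap.prod_apply, Function.prod, Algebra.linearMap_apply, Prod.mk.injEq] at hxy
    obtain ⟨u, hu, huniq⟩ := hpb (algebraMap Abar A'' x) (algebraMap Abar A' x) (hcomm x)
    have h1 := huniq x ⟨rfl, rfl⟩
    have h2 := huniq y ⟨hxy.1.symm, hxy.2.symm⟩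
    rw [h1, h2]
  have hexact : Function.Exact i d := by
    intro y
    constructor
    · intro hy
      have : algebraMap A'' A y.1 = algebraMap A' A y.2 := by
        simpa [hd, hπ'', hπ', sub_eq_zero] using hy
      obtain ⟨u, ⟨hu1, hu2⟩, -⟩ := hpb y.1 y.2 this
      exact ⟨u, by simp [hi, hu1, hu2]⟩
    · rintro ⟨x, rfl⟩
      simp [hd, hi, hπ'', hπ', sub_eq_zero, hcomm x]
  have hdsurj : Function.Surjective d := by
    intro a
    obtain ⟨a'', ha''⟩ := hsurj a
    exact ⟨(a'', 0), by simp [hd, hπ'', hπ', ha'']⟩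
  -- tensor with Bbar
  set iT := i.rTensor Bbar with hiT
  set dT := d.rTensor Bbar with hdT
  have hiTinj : Function.Injective iT := Module.Flat.rTensor_preserves_injective_linearMap i hinj
  have hexactT : Function.Exact iT dT := Module.Flat.rTensor_exact Bbar hexact
  set e := TensorProduct.prodLeft Abar Abar A'' A' Bbar with he
  have hiTform : ∀ b : Bbar, iT ((1 : Abar) ⊗ₜ[Abar] b) = ((1 : A''), (1 : A')) ⊗ₜ[Abar] b := by
    intro b
    simp [hiT, hi, Prod.ext_iff]
  have hdTform : ∀ u : (A'' × A') ⊗[Abar] Bbar, dT u = p'' (e u).1 - p' (e u).2 := by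
    intro u
    induction u using TensorProduct.induction_on with
    | zero => simp
    | tmul a b =>
        obtain ⟨a1, a2⟩ := a
        simp only [hdT, LinearMap.rTensor_tmul, hd, LinearMap.sub_apply, LinearMap.comp_apply,
          LinearMap.fst_apply, LinearMap.snd_apply, he, TensorProduct.prodLeft_tmul]
        rw [TensorProduct.sub_tmul]
        simp [hp'', hp']
    | add x y hx hy =>
        simp only [map_add, hx, hy, Prod.fst_add, Prod.snd_add]
        abel
  constructor
  · -- injectivity
    intro b₁ b₂ hb
    have h1 : f'' ((1 : A'') ⊗ₜ[Abar] b₁) = f'' ((1 : A'') ⊗ₜ[Abar] b₂) :=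
      congrArg (fun w => w.1.1) hb
    have h2 : g' ((1 : A') ⊗ₜ[Abar] b₁) = g' ((1 : A') ⊗ₜ[Abar] b₂) :=
      congrArg (fun w => w.1.2) hb
    have e1 : ((1 : A'') ⊗ₜ[Abar] b₁ : A'' ⊗[Abar] Bbar) = (1 : A'') ⊗ₜ[Abar] b₂ :=
      f''.injective h1
    have e2 : ((1 : A') ⊗ₜ[Abar] b₁ : A' ⊗[Abar] Bbar) = (1 : A') ⊗ₜ[Abar] b₂ :=
      g'.injective h2
    have : iT ((1 : Abar) ⊗ₜ[Abar] b₁) = iT ((1 : Abar) ⊗ₜ[Abar] b₂) := by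
      rw [hiTform, hiTform]
      have := congrArg e.symm (congrArg₂ Prod.mk e1 e2)
      simpa [he] using this
    have h3 := hiTinj this
    have := congrArg (TensorProduct.lid Abar Bbar) h3
    simpa using this
  · -- surjectivity
    rintro ⟨⟨b'', b'⟩, h⟩
    set z := f''.symm b'' with hz
    set w := g'.symm b' with hw
    have hb'' : b'' = f'' z := (f''.apply_symm_apply b'').symm
    have hb' : b' = g' w := (g'.apply_symm_apply b').symm
    have hpp : p'' z = p' w := by
      rw [← claim1 z, ← claim2 w, ← hb'', ← hb']
      exact congrArg η h
    have hker : dT (e.symm (z, w)) = 0 := by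
      rw [hdTform]
      simp [hpp]
    obtain ⟨t, ht⟩ := (hexactT _).mp hker
    set b := TensorProduct.lid Abar Bbar t with hbdef
    have htb : t = (1 : Abar) ⊗ₜ[Abar] b := by
      rw [hbdef, ← TensorProduct.lid_symm_apply]
      exact ((TensorProduct.lid Abar Bbar).symm_apply_apply t).symm
    have : ((1 : A''), (1 : A')) ⊗ₜ[Abar] b = e.symm (z, w) := by
      rw [← hiTform, ← htb, ht]
    have h6 := congrArg e this
    rw [LinearEquiv.apply_symm_apply, he, TensorProduct.prodLeft_tmul] at h6
    obtain ⟨hz1, hw1⟩ := Prod.ext_iff.mp h6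
    refine ⟨b, ?_⟩
    apply Subtype.ext
    simp only [Prod.mk.injEq]
    exact ⟨hb''.symm ▸ congrArg f'' hz1, hb'.symm ▸ congrArg g' hw1⟩
end

section
/- Let k be a field of characteristic p > 0, let (R, 𝔪) be a commutative local k-algebra whose residue field is k (i.e., the composite k → R → R/𝔪 is an isomorphism), and let A = k[λ]/(λ^{p+1}). Then for all a, b, m ∈ 𝔪 and for all x, y in the ideal λ²·(R ⊗_k A) of R ⊗_k A, one has (a ⊗ 1 + x)^{p+1} ≠ (b ⊗ 1 + m ⊗ λ + 1 ⊗ λ + y)^p in R ⊗_k A. -/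
open Polynomial
open scoped TensorProduct

/-- The truncated polynomial algebra `k[λ]/(λ^n)`. -/
abbrev TruncPoly (k : Type*) [CommRing k] (n : ℕ) : Type _ :=
  k[X] ⧸ Ideal.span {(X : k[X]) ^ n}

/-- The canonical nilpotent generator `λ` of `k[λ]/(λ^n)`. -/
noncomputable def truncGen (k : Type*) [CommRing k] (n : ℕ) : TruncPoly k n :=
  Ideal.Quotient.mk _ X

set_option maxHeartbeats 1000000 in
set_option synthInstance.maxHeartbeats 1000000 in
/-- Let `k` be a field of characteristic `p > 0`, `(R,𝔪)` a commutative
local `k`-algebra with residue field `k`, and `A = k[λ]/(λ^(p+1))`.  Then for all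
`a, b, m ∈ 𝔪` and all `x, y` in the ideal `λ²·(R ⊗_k A)`, one has
`(a ⊗ 1 + x)^(p+1) ≠ (b ⊗ 1 + m ⊗ λ + 1 ⊗ λ + y)^p` in `R ⊗_k A`. -/
theorem pow_ne_pow_of_nilpotent_perturbation
    (k : Type*) [Field k] (p : ℕ) (hp : p.Prime) [CharP k p]
    (R : Type*) [CommRing R] [Algebra k R] [IsLocalRing R]
    (hres : Function.Bijective ((IsLocalRing.residue R).comp (algebraMap k R)))
    (a b m : R) (ha : a ∈ IsLocalRing.maximalIdeal R)
    (hb : b ∈ IsLocalRing.maximalIdeal R) (hm : m ∈ IsLocalRing.maximalIdeal R)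
    (x y : R ⊗[k] TruncPoly k (p + 1))
    (hx : x ∈ Ideal.span {(1 : R) ⊗ₜ[k] ((truncGen k (p + 1)) ^ 2)})
    (hy : y ∈ Ideal.span {(1 : R) ⊗ₜ[k] ((truncGen k (p + 1)) ^ 2)}) :
    (a ⊗ₜ[k] (1 : TruncPoly k (p + 1)) + x) ^ (p + 1) ≠
      (b ⊗ₜ[k] (1 : TruncPoly k (p + 1)) + m ⊗ₜ[k] truncGen k (p + 1) +
        (1 : R) ⊗ₜ[k] truncGen k (p + 1) + y) ^ p := by
  intro h
  set t := truncGen k (p + 1) with ht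
  -- t ^ (p+1) = 0
  have htzero : t ^ (p + 1) = 0 := by
    rw [ht, truncGen, ← map_pow, Ideal.Quotient.eq_zero_iff_mem]
    exact Ideal.subset_span rfl
  -- t ^ p ≠ 0
  have htp : t ^ p ≠ 0 := by
    rw [ht, truncGen, ← map_pow, Ne, Ideal.Quotient.eq_zero_iff_mem,
      Ideal.mem_span_singleton]
    intro hdvd
    have := (Polynomial.X_pow_dvd_iff.mp hdvd) p (Nat.lt_succ_self p)
    rw [Polynomial.coeff_X_pow] at this
    simp at this
  -- residue算 map
  let e : k ≃+* R ⧸ IsLocalRing.maximalIdeal R :=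
    RingEquiv.ofBijective _ hres
  let ψ : R →ₐ[k] k :=
    { toRingHom := (e.symm : R ⧸ IsLocalRing.maximalIdeal R →+* k).comp
        (IsLocalRing.residue R)
      commutes' := fun c => by
        show e.symm (IsLocalRing.residue R (algebraMap k R c)) = c
        exact e.symm_apply_apply c }
  have hψ : ∀ r ∈ IsLocalRing.maximalIdeal R, ψ r = 0 := by
    intro r hr
    show e.symm (IsLocalRing.residue R r) = 0
    rw [show IsLocalRing.residue R r = 0 from Ideal.Quotient.eq_zero_iff_mem.mpr hr]
    exact map_zero e.symm
  obtain ⟨φ, hφ⟩ : ∃ φ : R ⊗[k] TruncPoly k (p + 1) →+* TruncPoly k (p + 1),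
      ∀ (r : R) (s : TruncPoly k (p + 1)),
        φ (r ⊗ₜ[k] s) = algebraMap k (TruncPoly k (p + 1)) (ψ r) * s := by
    refine ⟨(Algebra.TensorProduct.lift ((Algebra.ofId k _).comp ψ) (AlgHom.id k _)
      (fun r s => Commute.all _ _)).toRingHom, fun r s => ?_⟩
    simp [Algebra.TensorProduct.lift_tmul, Algebra.ofId_apply]
  obtain ⟨c, hc⟩ := (Ideal.mem_span_singleton (α := R ⊗[k] TruncPoly k (p + 1))).mp hx
  obtain ⟨d, hd⟩ := (Ideal.mem_span_singleton (α := R ⊗[k] TruncPoly k (p + 1))).mp hy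
  have hφx : φ x = t ^ 2 * φ c := by
    rw [hc, map_mul, hφ, map_one, map_one, one_mul]
  have hφy : φ y = t ^ 2 * φ d := by
    rw [hd, map_mul, hφ, map_one, map_one, one_mul]
  have h2 := congrArg φ h
  simp only [map_pow, map_add, hφ, hφx, hφy, hψ a ha, hψ b hb, hψ m hm,
    map_zero, map_one, zero_mul, one_mul, zero_add] at h2
  have hL : (t ^ 2 * φ c) ^ (p + 1) = 0 := by
    rw [mul_pow, ← pow_mul, pow_mul', htzero]
    simp
  have hR : (t + t ^ 2 * φ d) ^ p = t ^ p := by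
    have h1 : t + t ^ 2 * φ d = t * (1 + t * φ d) := by ring
    rw [h1, mul_pow]
    obtain ⟨u, hu⟩ : (1 + t * φ d) - 1 ∣ (1 + t * φ d) ^ p - 1 ^ p :=
      sub_dvd_pow_sub_pow _ _ _
    have hup : (1 + t * φ d) ^ p = 1 + t * φ d * u := by
      rw [one_pow] at hu; rw [← sub_add_cancel ((1 + t * φ d) ^ p) 1, hu]; ring
    rw [hup]
    have h3 : t ^ p * (1 + t * φ d * u) = t ^ p + t ^ (p + 1) * (φ d * u) := by ring
    rw [h3, htzero, zero_mul, add_zero]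
  rw [hL, hR] at h2
  exact htp h2.symm
end

section
/- Let k be a field of characteristic p > 0, let (R, 𝔪) be a commutative local k-algebra with residue field k, let a, b ∈ 𝔪 satisfy a^{p+1} = b^p, and let A = k[λ]/(λ^{p+1}). Then there is no A-algebra homomorphism F : R ⊗_k A → R ⊗_k A and element m ∈ 𝔪 such that F(a ⊗ 1) − a ⊗ 1 ∈ λ²·(R ⊗_k A) and F(b ⊗ 1) − (b ⊗ 1 + m ⊗ λ + 1 ⊗ λ) ∈ λ²·(R ⊗_k A). In particular this holds for R the localization of k[t^p, t^{p+1}] at the maximal ideal (t^p, t^{p+1}), with a = t^p and b = t^{p+1}. -/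
open Polynomial
open scoped TensorProduct

lemma truncGen_pow_self (k : Type*) [CommRing k] (n : ℕ) :
    (truncGen k n) ^ n = 0 := by
  rw [truncGen, ← map_pow, Ideal.Quotient.eq_zero_iff_mem]
  exact Ideal.mem_span_singleton_self _

lemma truncGen_pow_ne_zero (k : Type*) [Field k] (n m : ℕ) (h : m < n) :
    (truncGen k n) ^ m ≠ 0 := by
  rw [truncGen, ← map_pow, Ne, Ideal.Quotient.eq_zero_iff_mem,
    Ideal.mem_span_singleton]
  intro hdvd
  rw [Polynomial.X_pow_dvd_iff] at hdvd
  have := hdvd m h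
  simp at this

set_option maxHeartbeats 2000000 in
/-- Let `k` be a field of characteristic `p > 0`, `(R,𝔪)` a commutative
local `k`-algebra with residue field `k`, `a, b ∈ 𝔪` with `a^(p+1) = b^p`, and
`A = k[λ]/(λ^(p+1))`.  Then there is no `A`-algebra homomorphism `F : R ⊗_k A → R ⊗_k A`
and element `m ∈ 𝔪` with `F(a ⊗ 1) − a ⊗ 1 ∈ λ²·(R ⊗_k A)` and
`F(b ⊗ 1) − (b ⊗ 1 + m ⊗ λ + 1 ⊗ λ) ∈ λ²·(R ⊗_k A)`.  (In particular this holds for `R`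
the localization of `k[t^p, t^(p+1)]` at `(t^p, t^(p+1))`, `a = t^p`, `b = t^(p+1)`.)
Here the tensor product is written with the `A`-factor first, so `a ⊗ 1` is rendered as
`1 ⊗ₜ a`, `m ⊗ λ` as `λ ⊗ₜ m`, and so on. -/
theorem no_lift_of_deformation_automorphism_curve
    (k : Type*) [Field k] (p : ℕ) (hp : p.Prime) [CharP k p]
    (R : Type*) [CommRing R] [Algebra k R] [IsLocalRing R]
    (hres : Function.Bijective ((IsLocalRing.residue R).comp (algebraMap k R)))
    (a b : R) (ha : a ∈ IsLocalRing.maximalIdeal R)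
    (hb : b ∈ IsLocalRing.maximalIdeal R) (hab : a ^ (p + 1) = b ^ p) :
    ¬ ∃ (F : (TruncPoly k (p + 1) ⊗[k] R) →ₐ[TruncPoly k (p + 1)]
          (TruncPoly k (p + 1) ⊗[k] R)) (m : R),
        m ∈ IsLocalRing.maximalIdeal R ∧
        F ((1 : TruncPoly k (p + 1)) ⊗ₜ[k] a) - (1 : TruncPoly k (p + 1)) ⊗ₜ[k] a ∈
          Ideal.span {((truncGen k (p + 1)) ^ 2) ⊗ₜ[k] (1 : R)} ∧
        F ((1 : TruncPoly k (p + 1)) ⊗ₜ[k] b) -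
            ((1 : TruncPoly k (p + 1)) ⊗ₜ[k] b + truncGen k (p + 1) ⊗ₜ[k] m +
              truncGen k (p + 1) ⊗ₜ[k] (1 : R)) ∈
          Ideal.span {((truncGen k (p + 1)) ^ 2) ⊗ₜ[k] (1 : R)} := by
  rintro ⟨F, m, hm, hFa, hFb⟩
  set A := TruncPoly k (p + 1) with hA
  set lam := truncGen k (p + 1) with hlam
  have hlamtop : lam ^ (p + 1) = 0 := truncGen_pow_self k (p + 1)
  have hlamp : lam ^ p ≠ 0 := truncGen_pow_ne_zero k (p + 1) p (Nat.lt_succ_self p)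
  -- A is nontrivial of characteristic p
  have : Nontrivial A := nontrivial_of_ne _ _ hlamp
  have hinj : Function.Injective (algebraMap k A) := (algebraMap k A).injective
  have : CharP A p := charP_of_injective_algebraMap hinj p
  have : Fact p.Prime := ⟨hp⟩
  -- the residue map R →ₐ[k] k
  let e : k ≃+* IsLocalRing.ResidueField R :=
    RingEquiv.ofBijective _ hres
  let π : R →ₐ[k] k :=
    { toRingHom := (e.symm : IsLocalRing.ResidueField R →+* k).comp (IsLocalRing.residue R)
      commutes' := fun c => by
        have : (IsLocalRing.residue R) (algebraMap k R c) = e c := rfl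
        simp [this] }
  have hπ : ∀ x ∈ IsLocalRing.maximalIdeal R, π x = 0 := by
    intro x hx
    have hx0 : (IsLocalRing.residue R) x = 0 := Ideal.Quotient.eq_zero_iff_mem.mpr hx
    show e.symm ((IsLocalRing.residue R) x) = 0
    rw [hx0, map_zero]
  -- the evaluation map Φ : A ⊗[k] R →ₐ[A] A
  let Φ : (A ⊗[k] R) →ₐ[A] A :=
    Algebra.TensorProduct.lift (AlgHom.id A A) ((Algebra.ofId k A).comp π)
      (fun x y => Commute.all _ _)
  have hΦ : ∀ (x : A) (r : R), Φ (x ⊗ₜ[k] r) = (algebraMap k A (π r)) * x := by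
    intro x r
    simp [Φ, Algebra.TensorProduct.lift_tmul, mul_comm, Algebra.ofId_apply]
  -- extract the two witnesses
  obtain ⟨u, hu⟩ := (Ideal.mem_span_singleton (α := A ⊗[k] R)).mp hFa
  obtain ⟨v, hv⟩ := (Ideal.mem_span_singleton (α := A ⊗[k] R)).mp hFb
  have hu' : F ((1 : A) ⊗ₜ[k] a) = ((lam ^ 2) ⊗ₜ[k] (1 : R)) * u + (1 : A) ⊗ₜ[k] a :=
    sub_eq_iff_eq_add.mp hu
  have hv' : F ((1 : A) ⊗ₜ[k] b) =
      ((lam ^ 2) ⊗ₜ[k] (1 : R)) * v +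
        ((1 : A) ⊗ₜ[k] b + lam ⊗ₜ[k] m + lam ⊗ₜ[k] (1 : R)) :=
    sub_eq_iff_eq_add.mp hv
  -- the key equation
  have key : F ((1 : A) ⊗ₜ[k] a) ^ (p + 1) = F ((1 : A) ⊗ₜ[k] b) ^ p := by
    have h1 : ((1 : A) ⊗ₜ[k] a) ^ (p + 1) = ((1 : A) ⊗ₜ[k] b) ^ p := by
      rw [Algebra.TensorProduct.tmul_pow, Algebra.TensorProduct.tmul_pow, one_pow, one_pow, hab]
    rw [← F.coe_toRingHom, ← map_pow, ← map_pow, h1]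
  -- apply Φ
  have key2 : (Φ (F ((1 : A) ⊗ₜ[k] a))) ^ (p + 1) = (Φ (F ((1 : A) ⊗ₜ[k] b))) ^ p := by
    have := congrArg Φ key
    rwa [← Φ.coe_toRingHom, map_pow, map_pow] at this
  have hΦa : Φ (F ((1 : A) ⊗ₜ[k] a)) = lam ^ 2 * Φ u := by
    rw [hu', map_add, map_mul, hΦ, hΦ, hπ a ha]
    simp
  have hΦb : Φ (F ((1 : A) ⊗ₜ[k] b)) = lam ^ 2 * Φ v + lam := by
    rw [hv', map_add, map_mul, map_add, map_add, hΦ, hΦ, hΦ, hΦ, hπ b hb, hπ m hm]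
    simp
  rw [hΦa, hΦb] at key2
  -- vanishing powers of lam
  have hz1 : lam ^ (p + 1 + (p + 1)) = 0 := by rw [pow_add, hlamtop, zero_mul]
  have hz2 : lam ^ (p + 1 + (p - 1)) = 0 := by rw [pow_add, hlamtop, zero_mul]
  -- LHS is zero
  have hLHS : (lam ^ 2 * Φ u) ^ (p + 1) = 0 := by
    have e1 : (lam ^ 2 * Φ u) ^ (p + 1) = lam ^ (2 * (p + 1)) * Φ u ^ (p + 1) := by
      rw [mul_pow, ← pow_mul]
    have e2 : 2 * (p + 1) = p + 1 + (p + 1) := by ring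
    rw [e1, e2, hz1, zero_mul]
  -- RHS equals lam ^ p
  have hRHS : (lam ^ 2 * Φ v + lam) ^ p = lam ^ p := by
    have hfrob : (lam ^ 2 * Φ v + lam) ^ p = (lam ^ 2 * Φ v) ^ p + lam ^ p := by
      rw [add_pow_char]
    have e1 : (lam ^ 2 * Φ v) ^ p = lam ^ (2 * p) * Φ v ^ p := by
      rw [mul_pow, ← pow_mul]
    have e2 : 2 * p = p + 1 + (p - 1) := by
      have := hp.one_lt
      omega
    rw [hfrob, e1, e2, hz2, zero_mul, zero_add]
  rw [hLHS, hRHS] at key2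
  exact hlamp key2.symm
end

section
/- Let k be a field, p a prime, and K = k(x,y) the rational function field in two variables over k. Then the intersection of the k-subalgebras k[x⁻¹, x^p y] and k[x⁻¹, x^{-p}y⁻¹] of K equals the k-subalgebra k[x⁻¹] generated by x⁻¹. -/
open MvPolynomial

private lemma aeval_monomial_two {k K : Type*} [CommSemiring k] [CommSemiring K] [Algebra k K]
    (g : Fin 2 → K) (d : Fin 2 →₀ ℕ) (c : k) :
    aeval g (monomial d c) = algebraMap k K c * (g 0 ^ d 0 * g 1 ^ d 1) := by
  rw [aeval_monomial, Finsupp.prod_fintype _ _ fun i => pow_zero _, Fin.prod_univ_two]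

private lemma mem_adjoin_pair_iff {k K : Type*} [CommSemiring k] [CommSemiring K] [Algebra k K]
    (a b f : K) :
    f ∈ Algebra.adjoin k ({a, b} : Set K) ↔
      ∃ P : MvPolynomial (Fin 2) k, aeval ![a, b] P = f := by
  have h : ({a, b} : Set K) = Set.range ![a, b] := by
    ext t
    simp [Fin.exists_fin_two, or_comm]
  rw [h, Algebra.adjoin_range_eq_range_aeval]
  exact AlgHom.mem_range _

private lemma adjoin_pair_inf {k K : Type*} [Field k] [Field K] [Algebra k K]
    {a b : K} (hb : b ≠ 0) (hab : AlgebraicIndependent k ![a, b]) :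
    Algebra.adjoin k ({a, b} : Set K) ⊓ Algebra.adjoin k ({a, b⁻¹} : Set K) =
      Algebra.adjoin k ({a} : Set K) := by
  refine le_antisymm ?_ (le_inf (Algebra.adjoin_mono (by simp)) (Algebra.adjoin_mono (by simp)))
  rintro f ⟨hf1, hf2⟩
  obtain ⟨P, hP⟩ := (mem_adjoin_pair_iff a b f).1 hf1
  obtain ⟨Q, hQ⟩ := (mem_adjoin_pair_iff a b⁻¹ f).1 hf2
  set N := Q.degreeOf 1 with hN
  set Q' : MvPolynomial (Fin 2) k :=
    ∑ m ∈ Q.support, monomial (Finsupp.update m 1 (N - m 1)) (Q.coeff m) with hQ'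
  have hQ'eval : aeval ![a, b] Q' = b ^ N * aeval ![a, b⁻¹] Q := by
    conv_rhs => rw [Q.as_sum]
    rw [hQ', map_sum, map_sum, Finset.mul_sum]
    refine Finset.sum_congr rfl fun m hm => ?_
    have hm1 : m 1 ≤ N := monomial_le_degreeOf 1 hm
    rw [aeval_monomial_two, aeval_monomial_two]
    have h0 : (Finsupp.update m 1 (N - m 1)) 0 = m 0 := by
      rw [Finsupp.update]
      simp
    have h1 : (Finsupp.update m 1 (N - m 1)) 1 = N - m 1 := by simp
    rw [h0, h1]
    simp only [Matrix.cons_val_zero, Matrix.cons_val_one, Matrix.head_cons]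
    rw [inv_pow, pow_sub₀ b hb hm1]
    ring
  have heq : P * X 1 ^ N = Q' := by
    have h := algebraicIndependent_iff_injective_aeval.1 hab
    apply h
    rw [map_mul, map_pow, aeval_X, hQ'eval, hP, hQ]
    simp only [Matrix.cons_val_one, Matrix.head_cons, Matrix.cons_val_zero]
    ring
  have hsupp : ∀ m ∈ P.support, m 1 = 0 := by
    intro m hm
    by_contra hne
    have h1 : coeff (m + Finsupp.single 1 N) Q' = 0 := by
      rw [hQ', coeff_sum]
      apply Finset.sum_eq_zero
      intro m' hm'
      rw [coeff_monomial, if_neg]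
      intro hcontra
      have h := DFunLike.congr_fun hcontra 1
      simp [Finsupp.add_apply, Finsupp.single_apply] at h
      omega
    have h2 : coeff (m + Finsupp.single 1 N) (P * X 1 ^ N) = coeff m P := by
      rw [X_pow_eq_monomial, coeff_mul_monomial, mul_one]
    rw [heq, h1] at h2
    exact (mem_support_iff.1 hm) h2.symm
  rw [← hP, P.as_sum, map_sum]
  apply Subalgebra.sum_mem
  intro m hm
  rw [aeval_monomial_two]
  simp only [Matrix.cons_val_zero, Matrix.cons_val_one, Matrix.head_cons]
  rw [hsupp m hm, pow_zero, mul_one]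
  exact Subalgebra.mul_mem _ (Subalgebra.algebraMap_mem _ _)
    (Subalgebra.pow_mem _ (Algebra.subset_adjoin (Set.mem_singleton a)) _)

private lemma algIndep_uv {k K : Type*} [Field k] [Field K] [Algebra k K]
    {x y : K} (hx0 : x ≠ 0) (hxy : AlgebraicIndependent k ![x, y]) (p : ℕ) :
    AlgebraicIndependent k ![x⁻¹, x ^ p * y] := by
  rw [algebraicIndependent_iff]
  intro P hP
  set D := P.degreeOf 0 with hD
  set ψ : (Fin 2 →₀ ℕ) → (Fin 2 →₀ ℕ) :=
    fun m => Finsupp.single 0 (D - m 0 + p * m 1) + Finsupp.single 1 (m 1) with hψ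
  have hψ0 : ∀ m, ψ m 0 = D - m 0 + p * m 1 := by
    intro m; simp [hψ, Finsupp.single_apply]
  have hψ1 : ∀ m, ψ m 1 = m 1 := by
    intro m; simp [hψ, Finsupp.single_apply]
  set P' := ∑ m ∈ P.support, monomial (ψ m) (P.coeff m) with hP'
  have heval : aeval ![x, y] P' = x ^ D * aeval ![x⁻¹, x ^ p * y] P := by
    conv_rhs => rw [P.as_sum]
    rw [hP', map_sum, map_sum, Finset.mul_sum]
    refine Finset.sum_congr rfl fun m hm => ?_
    have hm0 : m 0 ≤ D := monomial_le_degreeOf 0 hm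
    rw [aeval_monomial_two, aeval_monomial_two, hψ0, hψ1]
    simp only [Matrix.cons_val_zero, Matrix.cons_val_one, Matrix.head_cons]
    rw [pow_add, pow_sub₀ x hx0 hm0, mul_pow, ← pow_mul, inv_pow]
    ring
  have hP'0 : P' = 0 := algebraicIndependent_iff.1 hxy P' (by rw [heval, hP, mul_zero])
  have hco : ∀ m ∈ P.support, P.coeff m = 0 := by
    intro m hm
    have hc : coeff (ψ m) P' = P.coeff m := by
      rw [hP', coeff_sum, Finset.sum_eq_single_of_mem m hm]
      · rw [coeff_monomial, if_pos rfl]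
      · intro m' hm' hne
        rw [coeff_monomial, if_neg]
        intro hcontra
        apply hne
        have h1 : m' 1 = m 1 := by rw [← hψ1 m', ← hψ1 m, hcontra]
        have h0' : D - m' 0 + p * m' 1 = D - m 0 + p * m 1 := by
          rw [← hψ0 m', ← hψ0 m, hcontra]
        have hm'0 : m' 0 ≤ D := monomial_le_degreeOf 0 hm'
        have hm0 : m 0 ≤ D := monomial_le_degreeOf 0 hm
        rw [h1] at h0'
        have h0 : m' 0 = m 0 := by omega
        refine Finsupp.ext fun i => ?_
        fin_cases i
        · exact h0
        · exact h1
    rw [hP'0, coeff_zero] at hc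
    exact hc.symm
  ext m
  simp only [coeff_zero]
  by_cases hm : m ∈ P.support
  · exact hco m hm
  · exact notMem_support_iff.1 hm

/-- Let `k` be a field, `p` a prime, and `K = k(x,y)`.  Then the
intersection of the `k`-subalgebras `k[x⁻¹, x^p y]` and `k[x⁻¹, x^(-p) y⁻¹]` of `K` equals
the `k`-subalgebra `k[x⁻¹]`. -/
theorem charts_intersection (k : Type*) [Field k] (p : ℕ) (hp : p.Prime)
    (K : Type*) [Field K] [Algebra (MvPolynomial (Fin 2) k) K]
    [IsFractionRing (MvPolynomial (Fin 2) k) K]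
    [Algebra k K] [IsScalarTower k (MvPolynomial (Fin 2) k) K]
    (x y : K)
    (hx : x = algebraMap (MvPolynomial (Fin 2) k) K (X 0))
    (hy : y = algebraMap (MvPolynomial (Fin 2) k) K (X 1)) :
    Algebra.adjoin k ({x⁻¹, x ^ p * y} : Set K) ⊓
        Algebra.adjoin k ({x⁻¹, (x ^ p * y)⁻¹} : Set K) =
      Algebra.adjoin k ({x⁻¹} : Set K) := by
  have hinj : Function.Injective (algebraMap (MvPolynomial (Fin 2) k) K) :=
    IsFractionRing.injective _ _
  have h1 : Function.Injective
      (aeval (R := k) (fun i : Fin 2 => algebraMap (MvPolynomial (Fin 2) k) K (X i))) := by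
    have h2 : (aeval (R := k) fun i : Fin 2 => algebraMap (MvPolynomial (Fin 2) k) K (X i)) =
        (IsScalarTower.toAlgHom k (MvPolynomial (Fin 2) k) K).comp (aeval X) := by
      rw [comp_aeval]
      rfl
    rw [h2, aeval_X_left, AlgHom.comp_id]
    exact hinj
  have hfam : ![x, y] = fun i : Fin 2 => algebraMap (MvPolynomial (Fin 2) k) K (X i) := by
    funext i; fin_cases i <;> simp [hx, hy]
  have hXY : AlgebraicIndependent k ![x, y] :=
    hfam ▸ algebraicIndependent_iff_injective_aeval.2 h1
  have hx0 : x ≠ 0 := by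
    rw [hx, Ne, map_eq_zero_iff _ hinj]
    exact X_ne_zero 0
  have hy0 : y ≠ 0 := by
    rw [hy, Ne, map_eq_zero_iff _ hinj]
    exact X_ne_zero 1
  exact adjoin_pair_inf (mul_ne_zero (pow_ne_zero _ hx0) hy0) (algIndep_uv hx0 hXY p)
end

section
/- Let k be a field, p a prime, K = k(x,y), and z := y^p/x ∈ K. Let R₀ = k[x,y,z] and R₂ = k[x⁻¹, x^{-p}y⁻¹] be the k-subalgebras of K generated by the indicated elements. Then the intersection (x^p y² · R₂) ∩ R₀ equals the k-linear span of {y, z, y², xy², x²y²} if p = 2, and equals the k-linear span of {y, y², xy², x²y², …, x^p y²} if p ≥ 3. In particular, (x^p y² · R₂) ∩ R₀ ⊆ y·R₀ + z·R₀. -/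
set_option maxHeartbeats 1000000

open MvPolynomial

theorem span_inter_span_of_li {k V ι : Type*} [Field k] [AddCommGroup V] [Module k V]
    {v : ι → V} (hv : LinearIndependent k v) (A B : Set ι) :
    Submodule.span k (v '' A) ⊓ Submodule.span k (v '' B)
      = Submodule.span k (v '' (A ∩ B)) := by
  refine le_antisymm ?_ (le_inf (Submodule.span_mono (Set.image_mono Set.inter_subset_left))
      (Submodule.span_mono (Set.image_mono Set.inter_subset_right)))
  rintro w ⟨hwA, hwB⟩
  have hA : Submodule.span k (v '' A)
      = Submodule.span k (v '' (A ∩ B)) ⊔ Submodule.span k (v '' (A \ B)) := by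
    rw [← Submodule.span_union, ← Set.image_union, Set.inter_union_diff]
  rw [hA] at hwA
  obtain ⟨w1, hw1, w2, hw2, rfl⟩ := Submodule.mem_sup.mp hwA
  have h1B : w1 ∈ Submodule.span k (v '' B) :=
    Submodule.span_mono (Set.image_mono (f := v) Set.inter_subset_right) hw1
  have h2B : w2 ∈ Submodule.span k (v '' B) := by
    have := sub_mem hwB h1B; simpa using this
  have hd : Disjoint (Submodule.span k (v '' (A \ B))) (Submodule.span k (v '' B)) :=
    hv.disjoint_span_image Set.disjoint_sdiff_left
  have h2 : w2 = 0 := by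
    have := hd.le_bot ⟨hw2, h2B⟩; simpa using this
  rw [h2, add_zero]; exact hw1

theorem laurent_li {k K : Type*} [Field k] [Field K]
    [Algebra (MvPolynomial (Fin 2) k) K] [IsFractionRing (MvPolynomial (Fin 2) k) K]
    [Algebra k K] [IsScalarTower k (MvPolynomial (Fin 2) k) K]
    {x y : K} (hx : x = algebraMap (MvPolynomial (Fin 2) k) K (X 0))
    (hy : y = algebraMap (MvPolynomial (Fin 2) k) K (X 1)) :
    LinearIndependent k (fun q : ℤ × ℤ => x ^ q.1 * y ^ q.2) := by
  have hinj : Function.Injective (algebraMap (MvPolynomial (Fin 2) k) K) :=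
    IsFractionRing.injective _ _
  have hx0 : x ≠ 0 := by
    rw [hx]; intro h
    exact MvPolynomial.X_ne_zero 0 (hinj (by simpa using h))
  have hy0 : y ≠ 0 := by
    rw [hy]; intro h
    exact MvPolynomial.X_ne_zero 1 (hinj (by simpa using h))
  rw [linearIndependent_iff']
  intro s g hsum q0 hq0
  set N : ℕ := s.sup fun q : ℤ × ℤ => max (-q.1).toNat (-q.2).toNat with hN
  have hNq : ∀ q ∈ s, 0 ≤ q.1 + (N : ℤ) ∧ 0 ≤ q.2 + (N : ℤ) := by
    intro q hq
    have h := Finset.le_sup (f := fun q : ℤ × ℤ => max (-q.1).toNat (-q.2).toNat) hq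
    rw [← hN] at h
    have h1 : (-q.1).toNat ≤ N := le_trans (le_max_left _ _) h
    have h2 : (-q.2).toNat ≤ N := le_trans (le_max_right _ _) h
    omega
  have key : ∑ q ∈ s, g q • (x ^ (q.1 + (N : ℤ)) * y ^ (q.2 + (N : ℤ))) = 0 := by
    calc ∑ q ∈ s, g q • (x ^ (q.1 + (N : ℤ)) * y ^ (q.2 + (N : ℤ)))
        = (∑ q ∈ s, g q • (x ^ q.1 * y ^ q.2)) * (x ^ (N : ℤ) * y ^ (N : ℤ)) := by
          rw [Finset.sum_mul]
          refine Finset.sum_congr rfl fun q hq => ?_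
          rw [smul_mul_assoc]
          congr 1
          rw [zpow_add₀ hx0, zpow_add₀ hy0]; ring
      _ = 0 := by rw [hsum, zero_mul]
  set ψ : MvPolynomial (Fin 2) k →ₐ[k] K := IsScalarTower.toAlgHom k _ K with hψdef
  have hψapp : ∀ f, ψ f = algebraMap (MvPolynomial (Fin 2) k) K f := fun f => rfl
  have hinjψ : Function.Injective ψ := fun a b h => hinj (by rwa [← hψapp, ← hψapp])
  have hψ0 : ψ (∑ q ∈ s, g q • (X 0 ^ (q.1 + (N : ℤ)).toNat
      * X 1 ^ (q.2 + (N : ℤ)).toNat : MvPolynomial (Fin 2) k)) = 0 := by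
    rw [map_sum, ← key]
    refine Finset.sum_congr rfl fun q hq => ?_
    rw [map_smul, map_mul, map_pow, map_pow]
    congr 1
    have h1 : ψ (X 0) = x := by rw [hψapp, hx]
    have h2 : ψ (X 1) = y := by rw [hψapp, hy]
    rw [h1, h2]
    rw [← zpow_natCast x, ← zpow_natCast y, Int.toNat_of_nonneg (hNq q hq).1,
      Int.toNat_of_nonneg (hNq q hq).2]
  have hpoly : (∑ q ∈ s, g q • (X 0 ^ (q.1 + (N : ℤ)).toNat
      * X 1 ^ (q.2 + (N : ℤ)).toNat : MvPolynomial (Fin 2) k)) = 0 := by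
    apply hinjψ; rw [hψ0, map_zero]
  set d : ℤ × ℤ → (Fin 2 →₀ ℕ) := fun q =>
    Finsupp.single 0 (q.1 + (N : ℤ)).toNat + Finsupp.single 1 (q.2 + (N : ℤ)).toNat with hd
  have hmon : ∀ q : ℤ × ℤ, (X 0 ^ (q.1 + (N : ℤ)).toNat
      * X 1 ^ (q.2 + (N : ℤ)).toNat : MvPolynomial (Fin 2) k) = monomial (d q) 1 := by
    intro q
    rw [X_pow_eq_monomial, X_pow_eq_monomial, monomial_mul, one_mul, hd]
  have hco := congrArg (coeff (d q0)) hpoly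
  rw [coeff_sum, coeff_zero] at hco
  have hterm : ∀ q ∈ s, coeff (d q0) (g q • (X 0 ^ (q.1 + (N : ℤ)).toNat
      * X 1 ^ (q.2 + (N : ℤ)).toNat : MvPolynomial (Fin 2) k))
      = if d q = d q0 then g q else 0 := by
    intro q hq
    rw [hmon, coeff_smul, coeff_monomial]
    split <;> simp
  rw [Finset.sum_congr rfl hterm] at hco
  rw [Finset.sum_eq_single_of_mem q0 hq0] at hco
  · rwa [if_pos rfl] at hco
  · intro q hq hne
    rw [if_neg]
    intro hdq
    apply hne
    have h0 : (d q) 0 = (d q0) 0 := by rw [hdq]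
    have h1 : (d q) 1 = (d q0) 1 := by rw [hdq]
    simp only [hd, Finsupp.add_apply, Finsupp.single_apply] at h0 h1
    norm_num at h0 h1
    have hq' := hNq q hq
    have hq0' := hNq q0 hq0
    apply Prod.ext <;> omega

/-- Let `k` be a field, `p` a prime, `K = k(x,y)`, `z = y^p/x`,
`R₀ = k[x,y,z]` and `R₂ = k[x⁻¹, x^(-p) y⁻¹]`.  Then `(x^p y² · R₂) ∩ R₀` equals the
`k`-span of `{y, z, y², xy², x²y²}` if `p = 2`, and the `k`-span of
`{y} ∪ {xⁱy² : 0 ≤ i ≤ p}` if `p ≥ 3`.  In particular `(x^p y² · R₂) ∩ R₀ ⊆ y·R₀ + z·R₀`. -/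
theorem chart_intersection_constrains_sigma_y (k : Type*) [Field k] (p : ℕ) (hp : p.Prime)
    (K : Type*) [Field K] [Algebra (MvPolynomial (Fin 2) k) K]
    [IsFractionRing (MvPolynomial (Fin 2) k) K]
    [Algebra k K] [IsScalarTower k (MvPolynomial (Fin 2) k) K]
    (x y z : K)
    (hx : x = algebraMap (MvPolynomial (Fin 2) k) K (X 0))
    (hy : y = algebraMap (MvPolynomial (Fin 2) k) K (X 1))
    (hz : z = y ^ p / x)
    (R₀ R₂ : Subalgebra k K)
    (hR₀ : R₀ = Algebra.adjoin k ({x, y, z} : Set K))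
    (hR₂ : R₂ = Algebra.adjoin k ({x⁻¹, (x ^ p * y)⁻¹} : Set K)) :
    (p = 2 → {w : K | ∃ f ∈ R₂, w = x ^ p * y ^ 2 * f} ∩ (R₀ : Set K) =
      (Submodule.span k ({y, z, y ^ 2, x * y ^ 2, x ^ 2 * y ^ 2} : Set K) : Set K)) ∧
    (3 ≤ p → {w : K | ∃ f ∈ R₂, w = x ^ p * y ^ 2 * f} ∩ (R₀ : Set K) =
      (Submodule.span k ({y} ∪ {w : K | ∃ i ≤ p, w = x ^ i * y ^ 2}) : Set K)) ∧
    {w : K | ∃ f ∈ R₂, w = x ^ p * y ^ 2 * f} ∩ (R₀ : Set K) ⊆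
      {w : K | ∃ u ∈ R₀, ∃ v ∈ R₀, w = y * u + z * v} := by
  have hinj : Function.Injective (algebraMap (MvPolynomial (Fin 2) k) K) :=
    IsFractionRing.injective _ _
  have hx0 : x ≠ 0 := by
    rw [hx]; intro h
    exact MvPolynomial.X_ne_zero 0 (hinj (by simpa using h))
  have hy0 : y ≠ 0 := by
    rw [hy]; intro h
    exact MvPolynomial.X_ne_zero 1 (hinj (by simpa using h))
  set μ : ℤ × ℤ → K := fun q => x ^ q.1 * y ^ q.2 with hμ
  have hli : LinearIndependent k μ := laurent_li hx hy
  have hμadd : ∀ q r : ℤ × ℤ, μ (q + r) = μ q * μ r := by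
    intro q r
    simp only [hμ, Prod.fst_add, Prod.snd_add, zpow_add₀ hx0, zpow_add₀ hy0]
    ring
  have hμx : μ (1, 0) = x := by simp [hμ]
  have hμy : μ (0, 1) = y := by simp [hμ]
  have hμz : μ (-1, (p : ℤ)) = z := by
    rw [hz]
    simp only [hμ, zpow_neg_one, zpow_natCast]
    rw [div_eq_mul_inv]; ring
  have hμpow : ∀ (q : ℤ × ℤ) (n : ℕ), μ q ^ n = μ (q.1 * n, q.2 * n) := by
    intro q n
    simp only [hμ]
    rw [mul_pow, ← zpow_natCast (x ^ q.1) n, ← zpow_natCast (y ^ q.2) n,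
      ← zpow_mul, ← zpow_mul]
  have hμone : μ (0, 0) = 1 := by simp [hμ]
  have hmono : ∀ i j l : ℕ, x ^ i * y ^ j * z ^ l = μ ((i : ℤ) - l, (j : ℤ) + p * l) := by
    intro i j l
    rw [← hμx, ← hμy, ← hμz, hμpow, hμpow, hμpow, ← hμadd, ← hμadd]
    show μ _ = μ _
    congr 1
    apply Prod.ext <;> (simp [Prod.fst_add, Prod.snd_add]; try ring)
  have hmono₂ : ∀ a b : ℕ, (x⁻¹) ^ a * ((x ^ p * y)⁻¹) ^ b
      = μ (-(a : ℤ) - p * b, -(b : ℤ)) := by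
    intro a b
    have h1 : x⁻¹ = μ (-1, 0) := by simp [hμ]
    have h2 : (x ^ p * y)⁻¹ = μ (-(p : ℤ), -1) := by
      show (x ^ p * y)⁻¹ = x ^ (-(p:ℤ)) * y ^ (-1:ℤ)
      rw [mul_inv, zpow_neg, zpow_natCast, zpow_neg_one]
    rw [h1, h2, hμpow, hμpow, ← hμadd]
    show μ _ = μ _
    congr 1
    apply Prod.ext <;> (simp [Prod.fst_add, Prod.snd_add]; try ring)
  -- index sets
  set Bset : Set (ℤ × ℤ) := {q | ∃ i j l : ℕ, q.1 = (i : ℤ) - l ∧ q.2 = (j : ℤ) + p * l}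
    with hBset
  set A₂ : Set (ℤ × ℤ) := {q | ∃ a b : ℕ, q.1 = -(a : ℤ) - p * b ∧ q.2 = -(b : ℤ)} with hA₂
  set Aset : Set (ℤ × ℤ) := {q | ∃ a b : ℕ, q.1 = (p : ℤ) - a - p * b ∧ q.2 = 2 - b}
    with hAset
  have hμxinv : x⁻¹ = μ (-1, 0) := by
    show x⁻¹ = x ^ (-1:ℤ) * y ^ (0:ℤ)
    rw [zpow_neg_one, zpow_zero, mul_one]
  have hμxy : (x ^ p * y)⁻¹ = μ (-(p : ℤ), -1) := by
    show (x ^ p * y)⁻¹ = x ^ (-(p:ℤ)) * y ^ (-1:ℤ)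
    rw [mul_inv, zpow_neg, zpow_natCast, zpow_neg_one]
  have hμn2 : ∀ n : ℕ, x ^ n * y ^ 2 = μ ((n:ℤ), 2) := by
    intro n
    show _ = x ^ ((n:ℕ):ℤ) * y ^ (2:ℤ)
    rw [← zpow_natCast x n, ← zpow_natCast y 2]
    norm_num
  have hR₀span : Subalgebra.toSubmodule R₀ = Submodule.span k (μ '' Bset) := by
    rw [hR₀, Algebra.adjoin_eq_span]
    congr 1
    ext w
    constructor
    · intro hw
      refine Submonoid.closure_induction (fun u hu => ?_) ?_ (fun u v _ _ hu hv => ?_) hw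
      · simp only [Set.mem_insert_iff, Set.mem_singleton_iff] at hu
        rcases hu with rfl | rfl | rfl
        · exact ⟨(1, 0), ⟨1, 0, 0, by norm_num, by norm_num⟩, hμx⟩
        · exact ⟨(0, 1), ⟨0, 1, 0, by norm_num, by norm_num⟩, hμy⟩
        · exact ⟨(-1, (p:ℤ)), ⟨0, 0, 1, by push_cast; try ring, by push_cast; try ring⟩, hμz⟩
      · exact ⟨(0, 0), ⟨0, 0, 0, by norm_num, by norm_num⟩, hμone⟩
      · obtain ⟨q, ⟨i, j, l, h1, h2⟩, rfl⟩ := hu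
        obtain ⟨r, ⟨i', j', l', h1', h2'⟩, rfl⟩ := hv
        refine ⟨q + r, ⟨i + i', j + j', l + l', ?_, ?_⟩, hμadd q r⟩
        · show q.1 + r.1 = _
          push_cast
          rw [h1, h1']; ring
        · show q.2 + r.2 = _
          push_cast
          rw [h2, h2']; ring
    · rintro ⟨q, ⟨i, j, l, h1, h2⟩, rfl⟩
      have hqe : q = ((i:ℤ) - l, (j:ℤ) + p * l) := Prod.ext h1 h2
      rw [hqe, ← hmono]
      show _ ∈ Submonoid.closure ({x, y, z} : Set K)
      refine mul_mem (mul_mem (pow_mem ?_ i) (pow_mem ?_ j)) (pow_mem ?_ l)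
      · exact Submonoid.subset_closure (Set.mem_insert _ _)
      · exact Submonoid.subset_closure (Set.mem_insert_of_mem _ (Set.mem_insert _ _))
      · exact Submonoid.subset_closure (Set.mem_insert_of_mem _ (Set.mem_insert_of_mem _ rfl))
  have hR₂span : Subalgebra.toSubmodule R₂ = Submodule.span k (μ '' A₂) := by
    rw [hR₂, Algebra.adjoin_eq_span]
    congr 1
    ext w
    constructor
    · intro hw
      refine Submonoid.closure_induction (fun u hu => ?_) ?_ (fun u v _ _ hu hv => ?_) hw
      · simp only [Set.mem_insert_iff, Set.mem_singleton_iff] at hu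
        rcases hu with rfl | rfl
        · exact ⟨(-1, 0), ⟨1, 0, by push_cast; try ring, by norm_num⟩, hμxinv.symm⟩
        · exact ⟨(-(p:ℤ), -1), ⟨0, 1, by push_cast; try ring, by push_cast; try ring⟩, hμxy.symm⟩
      · exact ⟨(0, 0), ⟨0, 0, by norm_num, by norm_num⟩, hμone⟩
      · obtain ⟨q, ⟨a, b, h1, h2⟩, rfl⟩ := hu
        obtain ⟨r, ⟨a', b', h1', h2'⟩, rfl⟩ := hv
        refine ⟨q + r, ⟨a + a', b + b', ?_, ?_⟩, hμadd q r⟩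
        · show q.1 + r.1 = _
          push_cast
          rw [h1, h1']; ring
        · show q.2 + r.2 = _
          push_cast
          rw [h2, h2']; ring
    · rintro ⟨q, ⟨a, b, h1, h2⟩, rfl⟩
      have hqe : q = (-(a:ℤ) - p * b, -(b:ℤ)) := Prod.ext h1 h2
      rw [hqe, ← hmono₂]
      show _ ∈ Submonoid.closure ({x⁻¹, (x ^ p * y)⁻¹} : Set K)
      refine mul_mem (pow_mem ?_ a) (pow_mem ?_ b)
      · exact Submonoid.subset_closure (Set.mem_insert _ _)
      · exact Submonoid.subset_closure (Set.mem_insert_of_mem _ rfl)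
  have hSset : {w : K | ∃ f ∈ R₂, w = x ^ p * y ^ 2 * f}
      = ↑(Submodule.map (LinearMap.mulLeft k (x ^ p * y ^ 2)) (Subalgebra.toSubmodule R₂)) := by
    ext w
    constructor
    · rintro ⟨f, hf, rfl⟩
      exact ⟨f, hf, rfl⟩
    · rintro ⟨f, hf, rfl⟩
      exact ⟨f, hf, rfl⟩
  have hc : x ^ p * y ^ 2 = μ ((p : ℤ), 2) := by
    show x ^ p * y ^ 2 = x ^ ((p:ℕ):ℤ) * y ^ (2:ℤ)
    rw [← zpow_natCast x p, ← zpow_natCast y 2]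
    norm_num
  have hS : Submodule.map (LinearMap.mulLeft k (x ^ p * y ^ 2)) (Subalgebra.toSubmodule R₂)
      = Submodule.span k (μ '' Aset) := by
    rw [hR₂span, Submodule.map_span]
    congr 1
    ext w
    constructor
    · rintro ⟨v, ⟨q, ⟨a, b, h1, h2⟩, rfl⟩, rfl⟩
      refine ⟨q + ((p:ℤ), 2), ⟨a, b, ?_, ?_⟩, ?_⟩
      · show q.1 + (p:ℤ) = _
        rw [h1]; ring
      · show q.2 + 2 = _
        rw [h2]; ring
      · rw [LinearMap.mulLeft_apply, hμadd, hc]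
        ring
    · rintro ⟨q, ⟨a, b, h1, h2⟩, rfl⟩
      refine ⟨μ (q - ((p:ℤ), 2)), ⟨q - ((p:ℤ), 2), ⟨a, b, ?_, ?_⟩, rfl⟩, ?_⟩
      · show q.1 - (p:ℤ) = _
        rw [h1]; ring
      · show q.2 - 2 = _
        rw [h2]; ring
      · rw [LinearMap.mulLeft_apply, hc, ← hμadd]
        congr 1
        apply Prod.ext
        · show (p:ℤ) + (q.1 - (p:ℤ)) = q.1; ring
        · show (2:ℤ) + (q.2 - 2) = q.2; ring
  have hmain : {w : K | ∃ f ∈ R₂, w = x ^ p * y ^ 2 * f} ∩ (R₀ : Set K)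
      = ↑(Submodule.span k (μ '' (Aset ∩ Bset))) := by
    have hco : (R₀ : Set K) = ↑(Subalgebra.toSubmodule R₀) := rfl
    rw [hSset, hco, hS, hR₀span]
    rw [← span_inter_span_of_li hli Aset Bset]
    rfl
  refine ⟨?_, ?_, ?_⟩
  · -- p = 2
    intro hp2
    subst hp2
    rw [hmain, SetLike.coe_set_eq]
    have hμz' : μ (-1, 2) = z := by
      have h := hμz; norm_num at h; exact h
    have e0 : μ (0, 2) = y ^ 2 := by
      have h := hμn2 0; norm_num at h; rw [← h]
    have e1 : μ (1, 2) = x * y ^ 2 := by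
      have h := hμn2 1; norm_num at h; rw [← h]
    have e2 : μ (2, 2) = x ^ 2 * y ^ 2 := by
      have h := hμn2 2; norm_num at h; rw [← h]
    apply le_antisymm
    · rw [Submodule.span_le]
      rintro w ⟨q, ⟨⟨a, b, ha1, ha2⟩, ⟨i, j, l, hb1, hb2⟩⟩, rfl⟩
      push_cast at ha1 ha2 hb1 hb2
      have hcase : (q.1 = 0 ∧ q.2 = 1) ∨
          (q.2 = 2 ∧ (q.1 = -1 ∨ q.1 = 0 ∨ q.1 = 1 ∨ q.1 = 2)) := by omega
      rcases hcase with ⟨h1, h2⟩ | ⟨h2, h1 | h1 | h1 | h1⟩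
      · rw [show q = ((0:ℤ), (1:ℤ)) from Prod.ext h1 h2, hμy]
        exact Submodule.subset_span (Set.mem_insert _ _)
      · rw [show q = ((-1:ℤ), (2:ℤ)) from Prod.ext h1 h2, hμz']
        exact Submodule.subset_span (Set.mem_insert_of_mem _ (Set.mem_insert _ _))
      · rw [show q = ((0:ℤ), (2:ℤ)) from Prod.ext h1 h2, e0]
        exact Submodule.subset_span
          (Set.mem_insert_of_mem _ (Set.mem_insert_of_mem _ (Set.mem_insert _ _)))
      · rw [show q = ((1:ℤ), (2:ℤ)) from Prod.ext h1 h2, e1]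
        exact Submodule.subset_span (Set.mem_insert_of_mem _ (Set.mem_insert_of_mem _
          (Set.mem_insert_of_mem _ (Set.mem_insert _ _))))
      · rw [show q = ((2:ℤ), (2:ℤ)) from Prod.ext h1 h2, e2]
        exact Submodule.subset_span (Set.mem_insert_of_mem _ (Set.mem_insert_of_mem _
          (Set.mem_insert_of_mem _ (Set.mem_insert_of_mem _ rfl))))
    · rw [Submodule.span_le]
      rintro w hw
      simp only [Set.mem_insert_iff, Set.mem_singleton_iff] at hw
      rcases hw with rfl | rfl | rfl | rfl | rfl
      · refine Submodule.subset_span ⟨(0, 1), ⟨?_, ?_⟩, hμy⟩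
        · exact ⟨0, 1, by push_cast; try omega, by push_cast; try omega⟩
        · exact ⟨0, 1, 0, by push_cast; try omega, by push_cast; try omega⟩
      · refine Submodule.subset_span ⟨(-1, 2), ⟨?_, ?_⟩, hμz'⟩
        · exact ⟨3, 0, by push_cast; try omega, by push_cast; try omega⟩
        · exact ⟨0, 0, 1, by push_cast; try omega, by push_cast; try omega⟩
      · refine Submodule.subset_span ⟨(0, 2), ⟨?_, ?_⟩, e0⟩
        · exact ⟨2, 0, by push_cast; try omega, by push_cast; try omega⟩
        · exact ⟨0, 2, 0, by push_cast; try omega, by push_cast; try omega⟩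
      · refine Submodule.subset_span ⟨(1, 2), ⟨?_, ?_⟩, e1⟩
        · exact ⟨1, 0, by push_cast; try omega, by push_cast; try omega⟩
        · exact ⟨1, 2, 0, by push_cast; try omega, by push_cast; try omega⟩
      · refine Submodule.subset_span ⟨(2, 2), ⟨?_, ?_⟩, e2⟩
        · exact ⟨0, 0, by push_cast; try omega, by push_cast; try omega⟩
        · exact ⟨2, 2, 0, by push_cast; try omega, by push_cast; try omega⟩
  · -- 3 ≤ p
    intro hp3
    rw [hmain, SetLike.coe_set_eq]
    apply le_antisymm
    · rw [Submodule.span_le]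
      rintro w ⟨q, ⟨⟨a, b, ha1, ha2⟩, ⟨i, j, l, hb1, hb2⟩⟩, rfl⟩
      have hP3 : (3:ℤ) ≤ (p:ℤ) := by exact_mod_cast hp3
      have hl0 : l = 0 := by
        by_contra hl
        have hl1 : (1:ℤ) ≤ (l:ℤ) := by
          exact_mod_cast Nat.one_le_iff_ne_zero.mpr hl
        have hpl : (p:ℤ) * 1 ≤ (p:ℤ) * l :=
          mul_le_mul_of_nonneg_left hl1 (by positivity)
        have heq : (j:ℤ) + p * l = 2 - b := by rw [← hb2, ha2]
        have hb0 : (0:ℤ) ≤ (b:ℤ) := Int.natCast_nonneg b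
        have hj0 : (0:ℤ) ≤ (j:ℤ) := Int.natCast_nonneg j
        linarith
      subst hl0
      push_cast at ha2 hb1 hb2
      have hbcase : b = 0 ∨ b = 1 ∨ b = 2 := by omega
      rcases hbcase with rfl | rfl | rfl
      · push_cast at ha1
        have h1 : 0 ≤ q.1 ∧ q.1 ≤ (p:ℤ) := by omega
        have h2 : q.2 = 2 := by omega
        have hq : q = ((q.1.toNat : ℤ), 2) := Prod.ext (by omega) h2
        rw [hq, ← hμn2]
        refine Submodule.subset_span (Set.mem_union_right _ ⟨q.1.toNat, by omega, rfl⟩)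
      · push_cast at ha1
        have h1 : q.1 = 0 := by omega
        have h2 : q.2 = 1 := by omega
        rw [show q = ((0:ℤ), (1:ℤ)) from Prod.ext h1 h2, hμy]
        exact Submodule.subset_span (Set.mem_union_left _ rfl)
      · exfalso
        push_cast at ha1
        omega
    · rw [Submodule.span_le]
      rintro w hw
      rcases hw with hw | ⟨n, hn, rfl⟩
      · rcases hw with rfl
        refine Submodule.subset_span ⟨(0, 1), ⟨?_, ?_⟩, hμy⟩
        · exact ⟨0, 1, by push_cast; try omega, by push_cast; try omega⟩
        · exact ⟨0, 1, 0, by push_cast; try omega, by push_cast; try omega⟩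
      · refine Submodule.subset_span ⟨((n:ℤ), 2), ⟨?_, ?_⟩, (hμn2 n).symm⟩
        · exact ⟨p - n, 0, by push_cast; try omega, by push_cast; try omega⟩
        · exact ⟨n, 2, 0, by push_cast; try omega, by push_cast; try omega⟩
  · -- final inclusion
    intro w hw
    have hxR : x ∈ R₀ := by
      rw [hR₀]; exact Algebra.subset_adjoin (Set.mem_insert _ _)
    have hyR : y ∈ R₀ := by
      rw [hR₀]; exact Algebra.subset_adjoin (Set.mem_insert_of_mem _ (Set.mem_insert _ _))
    have hzR : z ∈ R₀ := by
      rw [hR₀]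
      exact Algebra.subset_adjoin (Set.mem_insert_of_mem _ (Set.mem_insert_of_mem _ rfl))
    set T : Submodule k K :=
      { carrier := {w : K | ∃ u ∈ R₀, ∃ v ∈ R₀, w = y * u + z * v}
        add_mem' := by
          rintro w₁ w₂ ⟨u, hu, v, hv, rfl⟩ ⟨u', hu', v', hv', rfl⟩
          exact ⟨u + u', add_mem hu hu', v + v', add_mem hv hv', by ring⟩
        zero_mem' := ⟨0, zero_mem _, 0, zero_mem _, by ring⟩
        smul_mem' := by
          rintro c w ⟨u, hu, v, hv, rfl⟩
          refine ⟨c • u, R₀.smul_mem hu c, c • v, R₀.smul_mem hv c, ?_⟩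
          rw [smul_add, mul_smul_comm, mul_smul_comm] } with hT
    have hwT : w ∈ T → ∃ u ∈ R₀, ∃ v ∈ R₀, w = y * u + z * v := fun h => h
    have hμij : ∀ i j : ℕ, x ^ i * y ^ j = μ ((i:ℤ), (j:ℤ)) := by
      intro i j
      have h := hmono i j 0
      simpa using h
    rw [hmain] at hw
    apply hwT
    have hle : Submodule.span k (μ '' (Aset ∩ Bset)) ≤ T := by
      rw [Submodule.span_le]
      rintro w' ⟨q, ⟨⟨a, b, ha1, ha2⟩, ⟨i, j, l, hb1, hb2⟩⟩, rfl⟩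
      rcases Nat.eq_zero_or_pos l with rfl | hl
      · have hj : 1 ≤ j := by
          by_contra hj
          have hj0 : j = 0 := by omega
          subst hj0
          have hb2' : q.2 = 0 := by push_cast at hb2; omega
          have hbv : b = 2 := by push_cast at ha2; omega
          subst hbv
          push_cast at ha1 hb1
          have h2p := hp.two_le
          omega
        obtain ⟨j', rfl⟩ : ∃ j', j = j' + 1 := ⟨j - 1, by omega⟩
        have hqe : q = ((i:ℤ), ((j' + 1 : ℕ):ℤ)) := by
          apply Prod.ext
          · push_cast at hb1 ⊢; omega
          · push_cast at hb2 ⊢; omega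
        rw [hqe, ← hμij]
        exact ⟨x ^ i * y ^ j', mul_mem (pow_mem hxR i) (pow_mem hyR j'),
          0, zero_mem _, by ring⟩
      · obtain ⟨l', rfl⟩ : ∃ l', l = l' + 1 := ⟨l - 1, by omega⟩
        have hqe : q = ((i:ℤ) - ((l' + 1 : ℕ):ℤ), (j:ℤ) + (p:ℤ) * ((l' + 1 : ℕ):ℤ)) :=
          Prod.ext hb1 hb2
        rw [hqe, ← hmono]
        exact ⟨0, zero_mem _, x ^ i * y ^ j * z ^ l', mul_mem (mul_mem (pow_mem hxR i)
          (pow_mem hyR j)) (pow_mem hzR l'), by ring⟩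
    exact hle hw
end

section
/- Let k be a field, p a prime, K = k(x,y), and z := y^p/x ∈ K. Let R₀ = k[x,y,z] be the k-subalgebra of K generated by x, y, z, and k[x⁻¹] the k-subalgebra generated by x⁻¹. Then (y^p · k[x⁻¹]) ∩ R₀ = k·z + k·xz (the k-linear span of z and xz = y^p). In particular, (y^p · k[x⁻¹]) ∩ R₀ ⊆ z·R₀. -/
open MvPolynomial

/-!
Give `x` weight `p` and `y` weight `1`, so that `z = y ^ p / x` has weight `0`. Then every
element of `R₀ = k[x, y, z]` is a combination of monomials `x ^ a * y ^ b` (`a ∈ ℤ`) of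
nonnegative weight `p * a + b`, while `y ^ p * x⁻¹ ^ i` has weight `p * (1 - i) < 0` for `i ≥ 2`.
So `y ^ p * q (x⁻¹) ∈ R₀` forces `deg q ≤ 1`, i.e. it lies in `k z + k (x z)`. As `K` is only a
fraction field, weights are read off after clearing denominators: `a` has nonnegative weight when
some `x ^ N * a` is a polynomial all of whose monomials have weight at least `p * N`.
-/

theorem Polynomial.coeff_toMvPolynomial_single {R σ : Type*} [CommSemiring R] (i : σ)
    (r : Polynomial R) (n : ℕ) : (r.toMvPolynomial i).coeff (Finsupp.single i n) = r.coeff n := by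
  rw [Polynomial.toMvPolynomial_eq_rename_comp, AlgHom.comp_apply,
    ← Finsupp.mapDomain_single (f := fun _ : Unit ↦ i) (a := ()),
    coeff_rename_mapDomain _ (fun _ _ _ ↦ rfl), AlgEquiv.coe_toAlgHom, coeff_uniqueAlgEquiv_symm]
  exact congrArg r.coeff Finsupp.single_eq_same

theorem Polynomial.pow_mul_aeval_inv_eq_aeval_reflect {R K : Type*} [CommSemiring R] [Field K]
    [Algebra R K] {x : K} (hx : x ≠ 0) {q : Polynomial R} {N : ℕ} (hN : q.natDegree ≤ N) :
    x ^ N * Polynomial.aeval x⁻¹ q = Polynomial.aeval x (q.reflect N) := by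
  let : Invertible x⁻¹ := invertibleOfNonzero (inv_ne_zero hx)
  rw [Polynomial.aeval_def, Polynomial.aeval_def,
    ← Polynomial.eval₂_reflect_mul_pow (algebraMap R K) x⁻¹ N q hN, invOf_eq_inv, inv_inv,
    inv_pow, mul_comm, mul_assoc, inv_mul_cancel₀ (pow_ne_zero N hx), mul_one]

namespace MvPolynomial

section WeightAtLeast

variable {σ R : Type*} [CommSemiring R]

variable (R) in
noncomputable def weightAtLeast (w : σ → ℕ) (m : ℕ) : Submodule R (MvPolynomial σ R) :=
  restrictSupport R {d | m ≤ Finsupp.weight w d}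

variable {w : σ → ℕ}

theorem coeff_eq_zero_of_mem_weightAtLeast {m : ℕ} {P : MvPolynomial σ R}
    (hP : P ∈ weightAtLeast R w m) {d : σ →₀ ℕ} (hd : Finsupp.weight w d < m) :
    P.coeff d = 0 :=
  notMem_support_iff.mp fun h ↦ hd.not_ge (hP h)

theorem weightAtLeast_antitone : Antitone (weightAtLeast R w) :=
  fun _ _ hmn ↦ restrictSupport_mono _ fun _ hd ↦ le_trans hmn hd

theorem weightAtLeast_mul_le (m n : ℕ) :
    weightAtLeast R w m * weightAtLeast R w n ≤ weightAtLeast R w (m + n) := by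
  rw [weightAtLeast, weightAtLeast, ← restrictSupport_add]
  refine restrictSupport_mono _ ?_
  rintro _ ⟨d, hd, e, he, rfl⟩
  simp only [Set.mem_ofPred_eq, map_add] at *
  omega

theorem mul_mem_weightAtLeast {m n : ℕ} {P Q : MvPolynomial σ R}
    (hP : P ∈ weightAtLeast R w m) (hQ : Q ∈ weightAtLeast R w n) :
    P * Q ∈ weightAtLeast R w (m + n) :=
  weightAtLeast_mul_le m n (Submodule.mul_mem_mul hP hQ)

theorem C_mem_weightAtLeast_zero (a : R) : C a ∈ weightAtLeast R w 0 := by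
  simp [weightAtLeast, ← monomial_zero']

theorem X_pow_mem_weightAtLeast (i : σ) (n : ℕ) : X i ^ n ∈ weightAtLeast R w (n * w i) := by
  simp [weightAtLeast, X_pow_eq_monomial, Finsupp.weight_single]

theorem X_mem_weightAtLeast (i : σ) : X i ∈ weightAtLeast R w (w i) := by
  simpa using X_pow_mem_weightAtLeast (R := R) (w := w) i 1

end WeightAtLeast

section WeightNonnegSubalgebra

variable {σ k K : Type*} [CommSemiring k] [CommSemiring K] [Algebra k K]

/-- The elements of nonnegative `w`-weight in the image of `k[X][(X i)⁻¹]` in `K` under `φ`. -/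
def weightNonnegSubalgebra (φ : MvPolynomial σ k →ₐ[k] K) (w : σ → ℕ) (i : σ) :
    Subalgebra k K where
  carrier := {a | ∃ N, ∃ P ∈ weightAtLeast k w (N * w i), φ P = φ (X i) ^ N * a}
  mul_mem' := by
    rintro a b ⟨M, P, hP, hPa⟩ ⟨N, Q, hQ, hQb⟩
    refine ⟨M + N, P * Q, add_mul M N (w i) ▸ mul_mem_weightAtLeast hP hQ, ?_⟩
    rw [map_mul, hPa, hQb, pow_add]
    ring
  add_mem' := by
    rintro a b ⟨M, P, hP, hPa⟩ ⟨N, Q, hQ, hQb⟩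
    refine ⟨M + N, X i ^ N * P + X i ^ M * Q, add_mem ?_ ?_, ?_⟩
    · simpa [add_mul, add_comm] using mul_mem_weightAtLeast (X_pow_mem_weightAtLeast i N) hP
    · simpa [add_mul] using mul_mem_weightAtLeast (X_pow_mem_weightAtLeast i M) hQ
    · simp only [map_add, map_mul, map_pow, hPa, hQb, pow_add]
      ring
  algebraMap_mem' c := ⟨0, C c, by simpa using C_mem_weightAtLeast_zero c, by simp⟩

variable {φ : MvPolynomial σ k →ₐ[k] K} {w : σ → ℕ} {i : σ}

theorem X_mem_weightNonnegSubalgebra (j : σ) : φ (X j) ∈ weightNonnegSubalgebra φ w i :=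
  ⟨0, X j, by simpa using weightAtLeast_antitone (Nat.zero_le _) (X_mem_weightAtLeast j),
    by simp⟩

theorem exists_of_mem_weightNonnegSubalgebra {a : K} (ha : a ∈ weightNonnegSubalgebra φ w i)
    (M : ℕ) : ∃ N, M ≤ N ∧ ∃ P ∈ weightAtLeast k w (N * w i), φ P = φ (X i) ^ N * a := by
  obtain ⟨N, P, hP, hPa⟩ := ha
  refine ⟨N + M, le_add_self, X i ^ M * P, ?_, ?_⟩
  · simpa [add_mul, add_comm] using mul_mem_weightAtLeast (X_pow_mem_weightAtLeast i M) hP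
  · rw [map_mul, hPa, map_pow, pow_add]
    ring

theorem adjoin_le_weightNonnegSubalgebra {φ : MvPolynomial (Fin 2) k →ₐ[k] K} {p : ℕ} {z : K}
    (hz : φ (X 0) * z = φ (X 1) ^ p) :
    Algebra.adjoin k {φ (X 0), φ (X 1), z} ≤ weightNonnegSubalgebra φ ![p, 1] 0 := by
  rw [Algebra.adjoin_le_iff]
  rintro _ (rfl | rfl | rfl)
  · exact X_mem_weightNonnegSubalgebra 0
  · exact X_mem_weightNonnegSubalgebra 1
  · exact ⟨1, X 1 ^ p, by simpa using X_pow_mem_weightAtLeast (R := k) (w := ![p, 1]) 1 p,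
      by rw [map_pow, pow_one, hz]⟩

end WeightNonnegSubalgebra

theorem natDegree_le_one_of_X_one_pow_mul_aeval_mem {k K : Type*} [CommSemiring k] [Nontrivial k]
    [Field K] [Algebra k K] {φ : MvPolynomial (Fin 2) k →ₐ[k] K} (hφ : Function.Injective φ)
    {p : ℕ} (hp : 0 < p) {q : Polynomial k}
    (hq : φ (X 1) ^ p * Polynomial.aeval (φ (X 0))⁻¹ q ∈ weightNonnegSubalgebra φ ![p, 1] 0) :
    q.natDegree ≤ 1 := by
  have hx : φ (X 0) ≠ 0 := (map_ne_zero_iff φ hφ).mpr (X_ne_zero 0)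
  obtain ⟨N, hN, P, hP, hPq⟩ := exists_of_mem_weightNonnegSubalgebra hq q.natDegree
  have hP_eq : P = X 1 ^ p * (q.reflect N).toMvPolynomial 0 := hφ <| by
    rw [hPq, mul_left_comm, Polynomial.pow_mul_aeval_inv_eq_aeval_reflect hx hN, map_mul,
      map_pow, Polynomial.toMvPolynomial, Polynomial.aeval_algHom_apply]
  rw [Polynomial.natDegree_le_iff_coeff_eq_zero]
  intro i hi
  rcases le_or_gt i N with hiN | hNi
  · have hweight : Finsupp.weight ![p, 1] (Finsupp.single 0 (N - i) + Finsupp.single 1 p) <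
        N * ![p, 1] 0 := by
      simp only [map_add, Finsupp.weight_single, Matrix.cons_val_zero, Matrix.cons_val_one,
        smul_eq_mul, mul_one, ← Nat.succ_mul]
      exact Nat.mul_lt_mul_of_pos_right (by omega) hp
    have h_coeff := coeff_eq_zero_of_mem_weightAtLeast hP hweight
    rwa [hP_eq, mul_comm, X_pow_eq_monomial, coeff_mul_monomial, mul_one,
      Polynomial.coeff_toMvPolynomial_single, Polynomial.coeff_reflect,
      Polynomial.revAt_le (Nat.sub_le N i), Nat.sub_sub_self hiN] at h_coeff
  · exact Polynomial.coeff_eq_zero_of_natDegree_lt (hN.trans_lt hNi)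

end MvPolynomial

/-- Let `k` be a field, `p` a prime, `K = k(x,y)`, `z = y^p/x` and
`R₀ = k[x,y,z]`.  Then `(y^p · k[x⁻¹]) ∩ R₀ = k·z + k·xz`, the `k`-linear span of `z` and
`xz = y^p`.  In particular `(y^p · k[x⁻¹]) ∩ R₀ ⊆ z·R₀`. -/
theorem chart_intersection_constrains_sigma_z (k : Type*) [Field k] (p : ℕ) (hp : p.Prime)
    (K : Type*) [Field K] [Algebra (MvPolynomial (Fin 2) k) K]
    [IsFractionRing (MvPolynomial (Fin 2) k) K]
    [Algebra k K] [IsScalarTower k (MvPolynomial (Fin 2) k) K]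
    (x y z : K)
    (hx : x = algebraMap (MvPolynomial (Fin 2) k) K (X 0))
    (hy : y = algebraMap (MvPolynomial (Fin 2) k) K (X 1))
    (hz : z = y ^ p / x)
    (R₀ : Subalgebra k K)
    (hR₀ : R₀ = Algebra.adjoin k ({x, y, z} : Set K)) :
    {w : K | ∃ f ∈ Algebra.adjoin k ({x⁻¹} : Set K), w = y ^ p * f} ∩ (R₀ : Set K) =
      (Submodule.span k ({z, x * z} : Set K) : Set K) ∧
    {w : K | ∃ f ∈ Algebra.adjoin k ({x⁻¹} : Set K), w = y ^ p * f} ∩ (R₀ : Set K) ⊆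
      {w : K | ∃ u ∈ R₀, w = z * u} := by
  set φ := IsScalarTower.toAlgHom k (MvPolynomial (Fin 2) k) K
  have hφ : Function.Injective φ := IsFractionRing.injective (MvPolynomial (Fin 2) k) K
  replace hx : x = φ (X 0) := hx
  replace hy : y = φ (X 1) := hy
  have hx0 : x ≠ 0 := hx ▸ (map_ne_zero_iff φ hφ).mpr (X_ne_zero 0)
  have hxz : x * z = y ^ p := by rw [hz, mul_div_cancel₀ _ hx0]
  have hxR : x ∈ R₀ := hR₀ ▸ Algebra.subset_adjoin (by simp)
  have hzR : z ∈ R₀ := hR₀ ▸ Algebra.subset_adjoin (by simp)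
  have hR₀_le : R₀ ≤ weightNonnegSubalgebra φ ![p, 1] 0 := by
    subst hx hy
    exact hR₀ ▸ adjoin_le_weightNonnegSubalgebra hxz
  have h_linear (a b : k) : y ^ p * Polynomial.aeval x⁻¹ (Polynomial.C a * Polynomial.X +
      Polynomial.C b) = a • z + b • (x * z) := by
    simp only [map_add, map_mul, Polynomial.aeval_C, Polynomial.aeval_X, Algebra.smul_def, hz]
    field_simp
  have heq : {w : K | ∃ f ∈ Algebra.adjoin k ({x⁻¹} : Set K), w = y ^ p * f} ∩ (R₀ : Set K) =
      (Submodule.span k ({z, x * z} : Set K) : Set K) := by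
    rw [Algebra.adjoin_singleton_eq_range_aeval]
    apply Set.Subset.antisymm
    · rintro _ ⟨⟨_, ⟨q, rfl⟩, rfl⟩, hw⟩
      have hq := natDegree_le_one_of_X_one_pow_mul_aeval_mem hφ hp.pos (hx ▸ hy ▸ hR₀_le hw)
      obtain ⟨a, b, rfl⟩ := Polynomial.exists_eq_X_add_C_of_natDegree_le_one hq
      exact Submodule.mem_span_pair.mpr ⟨a, b, (h_linear a b).symm⟩
    · intro w hw
      obtain ⟨a, b, rfl⟩ := Submodule.mem_span_pair.mp hw
      exact ⟨⟨_, ⟨Polynomial.C a * Polynomial.X + Polynomial.C b, rfl⟩, (h_linear a b).symm⟩,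
        add_mem (R₀.smul_mem hzR a) (R₀.smul_mem (mul_mem hxR hzR) b)⟩
  refine ⟨heq, heq ▸ fun w hw ↦ ?_⟩
  obtain ⟨a, b, rfl⟩ := Submodule.mem_span_pair.mp hw
  exact ⟨algebraMap k K a + algebraMap k K b * x, add_mem (algebraMap_mem _ a)
    (mul_mem (algebraMap_mem _ b) hxR), by simp only [Algebra.smul_def]; ring⟩
end

section
/- Let k be a field of characteristic p > 0, let (R, 𝔪) be a commutative local k-algebra with residue field k, let x, y, z ∈ 𝔪 satisfy xz = y^p, and let A = k[λ]/(λ^{p+1}). Then there is no A-algebra homomorphism σ̃ : R ⊗_k A → R ⊗_k A satisfying all of: σ̃(x ⊗ 1) − x ⊗ 1 ∈ λ·(R ⊗_k A), σ̃(y ⊗ 1) − (y ⊗ 1 + 1 ⊗ λ) ∈ λ·𝔪·(R ⊗_k A) + λ²·(R ⊗_k A), and σ̃(z ⊗ 1) − z ⊗ 1 ∈ λ·𝔪·(R ⊗_k A) + λ^p·(R ⊗_k A). In particular this holds for R the localization of k[x,y,z]/(xz − y^p) at the maximal ideal (x,y,z). -/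
open Polynomial
open scoped TensorProduct

/-- Core computation: in a commutative ring of characteristic `p` with `l ^ (p+1) = 0`,
if `a = l·α`, `b = l + l²·β`, `c = l^p·γ` and `a·c = b^p`, then `l^p = 0`. -/
theorem trunc_core {A : Type*} [CommRing A] (p : ℕ) [Fact p.Prime] [CharP A p]
    (l a b c α β γ : A) (htop : l ^ (p + 1) = 0)
    (ha : a = l * α) (hb : b = l + l ^ 2 * β) (hc : c = l ^ p * γ)
    (heq : a * c = b ^ p) : l ^ p = 0 := by
  have hp1 : 1 ≤ p := (Fact.out : p.Prime).one_lt.le.trans' (by norm_num)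
  have h2p : l ^ (2 * p) = 0 := by
    have : 2 * p = (p + 1) + (p - 1) := by omega
    rw [this, pow_add, htop, zero_mul]
  have hpc : a * c = 0 := by
    rw [ha, hc]
    calc l * α * (l ^ p * γ) = l ^ (p + 1) * (α * γ) := by ring
    _ = 0 := by rw [htop, zero_mul]
  have hbp : b ^ p = l ^ p := by
    rw [hb, add_pow_char l (l ^ 2 * β) p, mul_pow, ← pow_mul, mul_comm (2 : ℕ) p,
      mul_comm p 2, h2p, zero_mul, add_zero]
  rw [hpc] at heq
  rw [← hbp, ← heq]


set_option maxHeartbeats 2000000 in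
set_option synthInstance.maxHeartbeats 2000000 in
/-- Let `k` be a field of characteristic `p > 0`, `(R,𝔪)` a commutative
local `k`-algebra with residue field `k`, `x, y, z ∈ 𝔪` with `xz = y^p`, and
`A = k[λ]/(λ^(p+1))`.  Then there is no `A`-algebra homomorphism `σ̃ : R ⊗_k A → R ⊗_k A`
with `σ̃(x ⊗ 1) − x ⊗ 1 ∈ λ·(R ⊗_k A)`,
`σ̃(y ⊗ 1) − (y ⊗ 1 + 1 ⊗ λ) ∈ λ·𝔪·(R ⊗_k A) + λ²·(R ⊗_k A)`, and
`σ̃(z ⊗ 1) − z ⊗ 1 ∈ λ·𝔪·(R ⊗_k A) + λ^p·(R ⊗_k A)`.  (In particular this holds for `R`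
the localization of `k[x,y,z]/(xz − y^p)` at `(x,y,z)`.)  Here the tensor product is written
with the `A`-factor first, so `x ⊗ 1` is rendered as `1 ⊗ₜ x` and `1 ⊗ λ` as `λ ⊗ₜ 1`. -/
theorem no_lift_of_deformation_automorphism_surface
    (k : Type*) [Field k] (p : ℕ) (hp : p.Prime) [CharP k p]
    (R : Type*) [CommRing R] [Algebra k R] [IsLocalRing R]
    (hres : Function.Bijective ((IsLocalRing.residue R).comp (algebraMap k R)))
    (x y z : R) (hx : x ∈ IsLocalRing.maximalIdeal R)
    (hy : y ∈ IsLocalRing.maximalIdeal R) (hz : z ∈ IsLocalRing.maximalIdeal R)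
    (hxz : x * z = y ^ p) :
    ¬ ∃ σ : (TruncPoly k (p + 1) ⊗[k] R) →ₐ[TruncPoly k (p + 1)]
          (TruncPoly k (p + 1) ⊗[k] R),
        σ ((1 : TruncPoly k (p + 1)) ⊗ₜ[k] x) - (1 : TruncPoly k (p + 1)) ⊗ₜ[k] x ∈
          Ideal.span {truncGen k (p + 1) ⊗ₜ[k] (1 : R)} ∧
        σ ((1 : TruncPoly k (p + 1)) ⊗ₜ[k] y) -
            ((1 : TruncPoly k (p + 1)) ⊗ₜ[k] y + truncGen k (p + 1) ⊗ₜ[k] (1 : R)) ∈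
          Ideal.span ((fun r : R => truncGen k (p + 1) ⊗ₜ[k] r) ''
              (IsLocalRing.maximalIdeal R : Set R)) +
            Ideal.span {((truncGen k (p + 1)) ^ 2) ⊗ₜ[k] (1 : R)} ∧
        σ ((1 : TruncPoly k (p + 1)) ⊗ₜ[k] z) - (1 : TruncPoly k (p + 1)) ⊗ₜ[k] z ∈
          Ideal.span ((fun r : R => truncGen k (p + 1) ⊗ₜ[k] r) ''
              (IsLocalRing.maximalIdeal R : Set R)) +
            Ideal.span {((truncGen k (p + 1)) ^ p) ⊗ₜ[k] (1 : R)} := by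
  rintro ⟨σ, hσx, hσy, hσz⟩
  haveI : Fact p.Prime := ⟨hp⟩
  set l : TruncPoly k (p + 1) := truncGen k (p + 1) with hldef
  -- basic facts about `l`
  have hlpow : ∀ n : ℕ, l ^ n = Ideal.Quotient.mk _ ((X : k[X]) ^ n) := by
    intro n; rw [hldef, truncGen, ← map_pow]
  have hltop : l ^ (p + 1) = 0 := by
    rw [hlpow, Ideal.Quotient.eq_zero_iff_mem]
    exact Ideal.mem_span_singleton_self _
  have hlp : l ^ p ≠ 0 := by
    rw [hlpow, Ne, Ideal.Quotient.eq_zero_iff_mem, Ideal.mem_span_singleton]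
    intro hdvd
    have hne : (X : k[X]) ^ p ≠ 0 := pow_ne_zero _ X_ne_zero
    have := Polynomial.natDegree_le_of_dvd hdvd hne
    simp [Polynomial.natDegree_X_pow] at this
  haveI : Nontrivial (TruncPoly k (p + 1)) := ⟨⟨l ^ p, 0, hlp⟩⟩
  haveI : CharP (TruncPoly k (p + 1)) p :=
    charP_of_injective_algebraMap (algebraMap k (TruncPoly k (p + 1))).injective p
  -- the residue map π : R → k
  let e : k ≃+* IsLocalRing.ResidueField R := RingEquiv.ofBijective _ hres
  let π : R →+* k := (e.symm : IsLocalRing.ResidueField R →+* k).comp (IsLocalRing.residue R)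
  have hπm : ∀ r ∈ IsLocalRing.maximalIdeal R, π r = 0 := by
    intro r hr
    have h0 : IsLocalRing.residue R r = 0 := Ideal.Quotient.eq_zero_iff_mem.mpr hr
    show e.symm (IsLocalRing.residue R r) = 0
    rw [h0, map_zero]
  have hπalg : ∀ c : k, π (algebraMap k R c) = c := by
    intro c
    show e.symm (IsLocalRing.residue R (algebraMap k R c)) = c
    have h1 : IsLocalRing.residue R (algebraMap k R c) = e c := rfl
    rw [h1, e.symm_apply_apply]
  let πₐ : R →ₐ[k] k := { π with commutes' := fun c => by simpa using hπalg c }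
  -- the evaluation map φ : A ⊗ R → A, a ⊗ r ↦ a · π(r)
  let φ : TruncPoly k (p + 1) ⊗[k] R →+* TruncPoly k (p + 1) :=
    (Algebra.TensorProduct.productMap (AlgHom.id k (TruncPoly k (p + 1)))
      ((Algebra.ofId k (TruncPoly k (p + 1))).comp πₐ)).toRingHom
  have hφ : ∀ (a : TruncPoly k (p + 1)) (r : R),
      φ (a ⊗ₜ[k] r) = a * algebraMap k (TruncPoly k (p + 1)) (π r) := fun a r => rfl
  have hφm : ∀ (a : TruncPoly k (p + 1)) (r : R), r ∈ IsLocalRing.maximalIdeal R →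
      φ (a ⊗ₜ[k] r) = 0 := by
    intro a r hr
    rw [hφ, hπm r hr, map_zero, mul_zero]
  have hφ1 : ∀ a : TruncPoly k (p + 1), φ (a ⊗ₜ[k] (1 : R)) = a := by
    intro a
    rw [hφ, map_one π, map_one, mul_one]
  -- φ kills the ideal generated by l ⊗ 𝔪
  have hker : ∀ w ∈ Ideal.span ((fun r : R => l ⊗ₜ[k] r) ''
      (IsLocalRing.maximalIdeal R : Set R)), φ w = 0 := by
    intro w hw
    have h1 := Ideal.mem_map_of_mem φ hw
    rw [Ideal.map_span] at h1
    have h2 : Ideal.span (φ '' ((fun r : R => l ⊗ₜ[k] r) ''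
        (IsLocalRing.maximalIdeal R : Set R))) ≤ ⊥ := by
      rw [Ideal.span_le]
      rintro _ ⟨_, ⟨r, hr, rfl⟩, rfl⟩
      simpa using hφm l r hr
    simpa using h2 h1
  -- φ of membership in a singleton span
  have hsing : ∀ (g w : TruncPoly k (p + 1) ⊗[k] R), w ∈ Ideal.span {g} →
      ∃ u : TruncPoly k (p + 1), φ w = φ g * u := by
    intro g w hw
    have h1 := Ideal.mem_map_of_mem φ hw
    rw [Ideal.map_span, Set.image_singleton] at h1
    obtain ⟨u, hu⟩ := Ideal.mem_span_singleton'.mp h1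
    exact ⟨u, by rw [← hu, mul_comm]⟩
  -- the three values
  obtain ⟨α, hα⟩ := hsing _ _ hσx
  rw [map_sub, hφm 1 x hx, sub_zero, hφ1 l] at hα
  obtain ⟨iy, hiy, jy, hjy, hysum⟩ := Submodule.mem_sup.mp hσy
  obtain ⟨β, hβ⟩ := hsing _ _ hjy
  rw [hφ1 (l ^ 2)] at hβ
  have hb : φ (σ (1 ⊗ₜ[k] y)) = l + l ^ 2 * β := by
    have := congrArg φ hysum
    rw [map_add, hker iy hiy, zero_add, hβ, map_sub, map_add, hφm 1 y hy, zero_add,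
      hφ1 l] at this
    linear_combination -this
  obtain ⟨iz, hiz, jz, hjz, hzsum⟩ := Submodule.mem_sup.mp hσz
  obtain ⟨γ, hγ⟩ := hsing _ _ hjz
  rw [hφ1 (l ^ p)] at hγ
  have hc : φ (σ (1 ⊗ₜ[k] z)) = l ^ p * γ := by
    have := congrArg φ hzsum
    rw [map_add, hker iz hiz, zero_add, hγ, map_sub, hφm 1 z hz, sub_zero] at this
    exact this.symm
  -- the multiplicative relation
  have hmul : σ (1 ⊗ₜ[k] x) * σ (1 ⊗ₜ[k] z) = σ (1 ⊗ₜ[k] y) ^ p := by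
    rw [show ∀ a b, σ a * σ b = σ (a * b) from fun a b => (map_mul σ.toRingHom a b).symm,
      show ∀ a (n : ℕ), σ a ^ n = σ (a ^ n) from fun a n => (map_pow σ.toRingHom a n).symm]
    congr 1
    rw [Algebra.TensorProduct.tmul_mul_tmul, one_mul, hxz,
      Algebra.TensorProduct.tmul_pow, one_pow]
  have heq : φ (σ (1 ⊗ₜ[k] x)) * φ (σ (1 ⊗ₜ[k] z)) = φ (σ (1 ⊗ₜ[k] y)) ^ p := by
    rw [← map_mul, ← map_pow, hmul]
  exact hlp (trunc_core p l _ _ _ α β γ hltop (by linear_combination hα) hb hc heq)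
end
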